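/- arXiv:2012.11030 — 6 statements merged into one kernel-verified Lean document; each statement's English description precedes it below -/
import Mathlib

section
/- If a linking function f on V equals a star function pOI, then f is weak: for every cycle C in the complete graph on V (a cyclically ordered list of k ≥ 3 distinct vertices), |f(C)| ≤ 1. Moreover f(C) = 0 whenever the cycle C does not contain the apex p. -/
open scoped Classical

section Defs

variable {V : Type*} {W : Type*}

/-- A map `V³ → ℤ` alternating in its arguments. -/
def IsAlt (f : V → V → V → ℤ) : Prop :=
  (∀ a b c, f b a c = - f a b c) ∧ (∀ a b c, f a c b = - f a b c)

/-- The simplicial cocycle identity. -/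
def IsCocycle (f : V → V → V → ℤ) : Prop :=
  ∀ a b c d, f b c d - f a c d + f a b d - f a b c = 0

/-- A linking function on `V`. -/
def IsLinkingFun (f : V → V → V → ℤ) : Prop := IsAlt f ∧ IsCocycle f

/-- A cycle in the complete graph on `V`: a list of at least 3 distinct vertices. -/
def IsCycle (C : List V) : Prop := C.Nodup ∧ 3 ≤ C.length

/-- The value of `f` on a cycle, via the standard triangulation
`f(C) = ∑_{i=1}^{k-2} f(v₀, vᵢ, vᵢ₊₁)`. -/
def cycleVal (f : V → V → V → ℤ) : List V → ℤ
  | [] => 0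
  | v :: rest => ∑ i ∈ Finset.range (rest.length - 1),
      f v (rest.getD i v) (rest.getD (i + 1) v)

/-- `f` is weak: `|f(C)| ≤ 1` for every cycle `C`. -/
def IsWeak (f : V → V → V → ℤ) : Prop :=
  ∀ C : List V, IsCycle C → |cycleVal f C| ≤ 1

/-- `f` is nontrivial: `f(C) ≠ 0` for some cycle `C`. -/
def IsNontrivial (f : V → V → V → ℤ) : Prop :=
  ∃ C : List V, IsCycle C ∧ cycleVal f C ≠ 0

noncomputable def starEdge (O I : Set V) (x y : V) : ℤ :=
  (if x ∈ O ∧ y ∈ I then 1 else 0) - (if x ∈ I ∧ y ∈ O then 1 else 0)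

/-- The star function `pOI`: the alternating function with value `1` on `(p,q,r)`
for `q ∈ O`, `r ∈ I`, and value `0` on triples not of this form up to reorientation. -/
noncomputable def starFun (p : V) (O I : Set V) (a b c : V) : ℤ :=
  (if a = p then starEdge O I b c else 0)
    - (if b = p then starEdge O I a c else 0)
    + (if c = p then starEdge O I a b else 0)

/-- `({p}, O, I)` is an ordered partition of `V` into three nonempty parts. -/
def IsStarPartition (p : V) (O I : Set V) : Prop :=
  O.Nonempty ∧ I.Nonempty ∧ p ∉ O ∧ p ∉ I ∧ Disjoint O I ∧
    insert p (O ∪ I) = (Set.univ : Set V)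

/-- A bilinking form between `V` and `W`. -/
def IsBilinking (lam : V → V → V → W → W → W → ℤ) : Prop :=
  (∀ u v w, IsLinkingFun (fun a b c => lam a b c u v w)) ∧
  (∀ a b c, IsLinkingFun (lam a b c))

/-- The value of a bilinking form on a pair of cycles. -/
def biCycleVal (lam : V → V → V → W → W → W → ℤ) (C : List V) (D : List W) : ℤ :=
  cycleVal (fun a b c => cycleVal (lam a b c) D) C

/-- `K_V` and `K_W` are weakly linked under `lam`. -/
def WeaklyLinked (lam : V → V → V → W → W → W → ℤ) : Prop :=
  (∀ (C : List V) (D : List W), IsCycle C → IsCycle D → |biCycleVal lam C D| ≤ 1) ∧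
  ∃ (C : List V) (D : List W), IsCycle C ∧ IsCycle D ∧ biCycleVal lam C D ≠ 0

end Defs

/-! The cocycle identity lets one move the cone point of the triangulation, so `f(C)` is
invariant under rotating `C`, and a cycle through the apex may be assumed to start at `p`.
On triangles `(p, b, c)` the star function equals `φ b - φ c`, where `φ` is the indicator of `O`,
so the triangulation sum telescopes to `φ v₁ - φ v_{k-1} ∈ {-1, 0, 1}`; on triangles avoiding
`p` it vanishes. -/

section

variable {V : Type*}

def pathSum (g : V → V → ℤ) : List V → ℤ
  | x :: y :: l => g x y + pathSum g (y :: l)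
  | _ => 0

@[simp] lemma pathSum_nil (g : V → V → ℤ) : pathSum g [] = 0 := rfl

@[simp] lemma pathSum_singleton (g : V → V → ℤ) (x : V) : pathSum g [x] = 0 := rfl

@[simp] lemma pathSum_cons_cons (g : V → V → ℤ) (x y : V) (l : List V) :
    pathSum g (x :: y :: l) = g x y + pathSum g (y :: l) := rfl

lemma pathSum_congr {g g' : V → V → ℤ} :
    ∀ {l : List V}, (∀ x ∈ l, ∀ y ∈ l, g x y = g' x y) → pathSum g l = pathSum g' l
  | [], _ | [_], _ => rfl
  | x :: y :: l, h => by
    rw [pathSum_cons_cons, pathSum_cons_cons, h x (by simp) y (by simp),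
      pathSum_congr fun a ha b hb => h a (.tail x ha) b (.tail x hb)]

lemma pathSum_zero : ∀ l : List V, pathSum (fun _ _ => 0) l = 0
  | [] | [_] => rfl
  | _ :: y :: l => by rw [pathSum_cons_cons, pathSum_zero (y :: l), add_zero]

lemma pathSum_add (g g' : V → V → ℤ) :
    ∀ l : List V, pathSum (fun x y => g x y + g' x y) l = pathSum g l + pathSum g' l
  | [] | [_] => rfl
  | x :: y :: l => by simp only [pathSum_cons_cons, pathSum_add g g' (y :: l)]; ring

lemma pathSum_sub (φ : V → ℤ) (x : V) :
    ∀ l : List V, pathSum (fun a b => φ a - φ b) (x :: l) = φ x - φ (l.getLastD x)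
  | [] => by simp
  | y :: l => by rw [pathSum_cons_cons, pathSum_sub φ y l, List.getLastD_cons]; ring

lemma pathSum_concat (g : V → V → ℤ) (x v : V) :
    ∀ l : List V, pathSum g (x :: (l ++ [v])) = pathSum g (x :: l) + g (l.getLastD x) v
  | [] => by simp
  | y :: l => by
    rw [List.cons_append, pathSum_cons_cons, pathSum_cons_cons, pathSum_concat g y v l,
      List.getLastD_cons]; ring

lemma sum_range_getD_eq_pathSum (g : V → V → ℤ) (d : V) :
    ∀ l : List V, ∑ i ∈ Finset.range (l.length - 1), g (l.getD i d) (l.getD (i + 1) d) =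
      pathSum g l
  | [] | [_] => by simp
  | x :: y :: l => by
    rw [List.length_cons, List.length_cons, Nat.add_sub_cancel, Finset.sum_range_succ',
      pathSum_cons_cons, ← sum_range_getD_eq_pathSum g d (y :: l)]
    simp only [List.getD_cons_succ, List.getD_cons_zero, List.length_cons, Nat.add_sub_cancel]
    ring

lemma cycleVal_cons_eq_pathSum (f : V → V → V → ℤ) (v : V) (l : List V) :
    cycleVal f (v :: l) = pathSum (f v) l :=
  sum_range_getD_eq_pathSum (f v) v l

lemma IsCocycle.pathSum_cone_change {f : V → V → V → ℤ} (hf : IsCocycle f) (v w x : V)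
    (l : List V) :
    pathSum (f v) (x :: l) = pathSum (f w) (x :: l) + f w v x - f w v (l.getLastD x) := by
  rw [pathSum_congr (g' := fun a b => f w a b + (f w v a - f w v b))
      fun a _ b _ => by linarith [hf w v a b],
    pathSum_add, pathSum_sub]
  ring

lemma IsLinkingFun.cycleVal_cons_cons {f : V → V → V → ℤ} (hf : IsLinkingFun f) (v w : V)
    (l : List V) : cycleVal f (v :: w :: l) = cycleVal f (w :: (l ++ [v])) := by
  obtain ⟨⟨hswap, hswap'⟩, hcocycle⟩ := hf
  rw [cycleVal_cons_eq_pathSum, cycleVal_cons_eq_pathSum, hcocycle.pathSum_cone_change v w]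
  cases l with
  | nil => simp
  | cons x l =>
    rw [pathSum_cons_cons, List.cons_append, pathSum_concat, List.getLastD_cons]
    linarith [hswap w w x, hswap w w v, hswap' w w v, hswap' w v (l.getLastD x)]

lemma IsLinkingFun.cycleVal_rotate {f : V → V → V → ℤ} (hf : IsLinkingFun f) (n : ℕ) :
    ∀ C : List V, cycleVal f (C.rotate n) = cycleVal f C := by
  induction n with
  | zero => simp
  | succ n ih =>
    rintro (_ | ⟨v, _ | ⟨w, l⟩⟩)
    · simp
    · simp
    · rw [List.rotate_cons_succ, ih, List.cons_append, hf.cycleVal_cons_cons]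

lemma IsStarPartition.mem_right_iff {p : V} {O I : Set V} (h : IsStarPartition p O I) {x : V}
    (hx : x ≠ p) : x ∈ I ↔ x ∉ O := by
  obtain ⟨-, -, -, -, hdisj, hcover⟩ := h
  have hx' : x ∈ insert p (O ∪ I) := hcover ▸ Set.mem_univ x
  rcases hx' with rfl | hO | hI
  · exact absurd rfl hx
  · exact iff_of_false (Set.disjoint_left.mp hdisj hO) (not_not.mpr hO)
  · exact iff_of_true hI (Set.disjoint_right.mp hdisj hI)

lemma starFun_apex {p : V} {O I : Set V} (h : IsStarPartition p O I) {b c : V} (hb : b ≠ p)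
    (hc : c ≠ p) : starFun p O I p b c = O.indicator 1 b - O.indicator 1 c := by
  simp only [starFun, starEdge, h.mem_right_iff hb, h.mem_right_iff hc, Set.indicator_apply,
    if_neg hb, if_neg hc]
  split_ifs <;> simp_all

lemma starFun_of_ne {p : V} {O I : Set V} {a b c : V} (ha : a ≠ p) (hb : b ≠ p) (hc : c ≠ p) :
    starFun p O I a b c = 0 := by
  simp [starFun, ha, hb, hc]

lemma cycleVal_starFun_of_not_mem {p : V} {O I : Set V} {C : List V} (hp : p ∉ C) :
    cycleVal (starFun p O I) C = 0 := by
  cases C with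
  | nil => rfl
  | cons v l =>
    rw [cycleVal_cons_eq_pathSum, ← pathSum_zero l]
    exact pathSum_congr fun x hx y hy => starFun_of_ne (ne_of_mem_of_not_mem List.mem_cons_self hp)
      (ne_of_mem_of_not_mem (List.mem_cons_of_mem v hx) hp)
      (ne_of_mem_of_not_mem (List.mem_cons_of_mem v hy) hp)

lemma abs_cycleVal_starFun_apex_cons_le {p : V} {O I : Set V} (h : IsStarPartition p O I)
    {l : List V} (hp : p ∉ l) : |cycleVal (starFun p O I) (p :: l)| ≤ 1 := by
  cases l with
  | nil => simp [cycleVal]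
  | cons x l =>
    rw [cycleVal_cons_eq_pathSum,
      pathSum_congr fun a ha b hb =>
        starFun_apex h (ne_of_mem_of_not_mem ha hp) (ne_of_mem_of_not_mem hb hp),
      pathSum_sub]
    simp only [Set.indicator_apply, Pi.one_apply]
    split_ifs <;> norm_num

end

theorem star_implies_weak_general {V : Type*} (p : V) (O I : Set V)
    (h : IsStarPartition p O I)
    (f : V → V → V → ℤ) (hf : IsLinkingFun f) (hfstar : f = starFun p O I) :
    (∀ C : List V, IsCycle C → |cycleVal f C| ≤ 1) ∧
    (∀ C : List V, IsCycle C → p ∉ C → cycleVal f C = 0) := by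
  subst hfstar
  refine ⟨fun C hC => ?_, fun C _ hp => cycleVal_starFun_of_not_mem hp⟩
  by_cases hp : p ∈ C
  · obtain ⟨l₁, l₂, rfl⟩ := List.append_of_mem hp
    have hnodup := (List.nodup_rotate (n := l₁.length)).mpr hC.1
    rw [List.rotate_append_length_eq] at hnodup
    rw [← hf.cycleVal_rotate l₁.length, List.rotate_append_length_eq]
    exact abs_cycleVal_starFun_apex_cons_le h (List.nodup_cons.mp hnodup).1
  · simp [cycleVal_starFun_of_not_mem hp]

/-- a linking function equal to a star function is weak, and vanishes
on cycles not containing the apex. -/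
theorem star_implies_weak {V : Type*} [Fintype V] (p : V) (O I : Set V)
    (h : IsStarPartition p O I)
    (f : V → V → V → ℤ) (hf : IsLinkingFun f) (hfstar : f = starFun p O I) :
    (∀ C : List V, IsCycle C → |cycleVal f C| ≤ 1) ∧
    (∀ C : List V, IsCycle C → p ∉ C → cycleVal f C = 0) :=
  star_implies_weak_general p O I h f hf hfstar
end

section
/- Let V have exactly 4 elements and let f be a weak nontrivial linking function on V. Then f links V in a fan: there is a labelling V = {p,q,r,s} such that f equals the star function p{q}{r,s} (i.e., f(p,q,r) = f(p,q,s) = 1, and f vanishes on the triangles (p,r,s) and (q,r,s)). -/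
open scoped Classical

section Helpers
variable {V : Type*}

variable {V : Type*}

lemma cycleVal3 (f : V → V → V → ℤ) (a b c : V) : cycleVal f [a,b,c] = f a b c := by
  simp [cycleVal]

lemma cycleVal4 (f : V → V → V → ℤ) (a b c d : V) :
    cycleVal f [a,b,c,d] = f a b c + f a c d := by
  simp [cycleVal, Finset.sum_range_succ]

lemma cycleVal_zero (C : List V) : cycleVal (fun _ _ _ => (0:ℤ)) C = 0 := by
  cases C <;> simp [cycleVal]

lemma diag1 {f : V → V → V → ℤ} (h : IsAlt f) (x y : V) : f x x y = 0 := by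
  have := h.1 x x y; omega

lemma diag2 {f : V → V → V → ℤ} (h : IsAlt f) (x y : V) : f x y x = 0 := by
  have h1 := h.1 x y x; have h2 := h.2 y x x; have h3 := h.1 x x y; omega

lemma diag3 {f : V → V → V → ℤ} (h : IsAlt f) (x y : V) : f x y y = 0 := by
  have := h.2 x y y; omega

lemma fan_case {f : V → V → V → ℤ} (hlin : IsLinkingFun f) (p q r s : V)
    (hcover : ∀ v : V, v = p ∨ v = q ∨ v = r ∨ v = s)
    (hpq : p ≠ q) (hpr : p ≠ r) (hps : p ≠ s) (hqr : q ≠ r) (hqs : q ≠ s) (hrs : r ≠ s)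
    (h1 : f p q r = 1) (h2 : f p q s = 1) (h3 : f p r s = 0) :
    ∃ p q r s : V, [p, q, r, s].Nodup ∧ ({p, q, r, s} : Set V) = Set.univ ∧
      f = starFun p ({q} : Set V) ({r, s} : Set V) := by
  obtain ⟨⟨ha1, ha2⟩, hcoc⟩ := hlin
  have h4 : f q r s = 0 := by have := hcoc p q r s; omega
  refine ⟨p, q, r, s, by simp [hpq, hpr, hps, hqr, hqs, hrs], ?_, ?_⟩
  · ext v; simpa using hcover v
  have e1 : f p r q = -1 := by have := ha2 p q r; omega
  have e2 : f q p r = -1 := by have := ha1 p q r; omega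
  have e3 : f q r p = 1 := by have := ha2 q p r; omega
  have e4 : f r p q = 1 := by have h := ha1 q r p; have := ha2 r q p; omega
  have e5 : f r q p = -1 := by have := ha2 r p q; omega
  have g1 : f p s q = -1 := by have := ha2 p q s; omega
  have g2 : f q p s = -1 := by have := ha1 p q s; omega
  have g3 : f q s p = 1 := by have := ha2 q p s; omega
  have g4 : f s p q = 1 := by have h := ha1 q s p; have := ha2 s q p; omega
  have g5 : f s q p = -1 := by have := ha2 s p q; omega
  have i1 : f p s r = 0 := by have := ha2 p r s; omega
  have i2 : f r p s = 0 := by have := ha1 p r s; omega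
  have i3 : f r s p = 0 := by have := ha2 r p s; omega
  have i4 : f s p r = 0 := by have h := ha1 r s p; have := ha2 s r p; omega
  have i5 : f s r p = 0 := by have := ha2 s p r; omega
  have j1 : f q s r = 0 := by have := ha2 q r s; omega
  have j2 : f r q s = 0 := by have := ha1 q r s; omega
  have j3 : f r s q = 0 := by have := ha2 r q s; omega
  have j4 : f s q r = 0 := by have h := ha1 r s q; have := ha2 s r q; omega
  have j5 : f s r q = 0 := by have := ha2 s q r; omega
  have d1 := diag1 ⟨ha1, ha2⟩
  have d2 := diag2 ⟨ha1, ha2⟩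
  have d3 := diag3 ⟨ha1, ha2⟩
  have hqp := hpq.symm; have hrp := hpr.symm; have hsp := hps.symm
  have hrq := hqr.symm; have hsq := hqs.symm; have hsr := hrs.symm
  funext x y z
  rcases hcover x with hx | hx | hx | hx <;> rcases hcover y with hy | hy | hy | hy <;>
    rcases hcover z with hz | hz | hz | hz <;> subst hx hy hz <;>
    simp [starFun, starEdge, Set.mem_singleton_iff, Set.mem_insert_iff,
      hpq, hpr, hps, hqr, hqs, hrs, hqp, hrp, hsp, hrq, hsq, hsr,
      d1, d2, d3, h1, h2, h3, h4, e1, e2, e3, e4, e5, g1, g2, g3, g4, g5,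
      i1, i2, i3, i4, i5, j1, j2, j3, j4, j5]

lemma zero_case {f : V → V → V → ℤ} (hlin : IsLinkingFun f) (p q r s : V)
    (hcover : ∀ v : V, v = p ∨ v = q ∨ v = r ∨ v = s)
    (h1 : f p q r = 0) (h2 : f p q s = 0) (h3 : f p r s = 0) :
    f = fun _ _ _ => (0 : ℤ) := by
  obtain ⟨⟨ha1, ha2⟩, hcoc⟩ := hlin
  have h4 : f q r s = 0 := by have := hcoc p q r s; omega
  have e1 : f p r q = 0 := by have := ha2 p q r; omega
  have e2 : f q p r = 0 := by have := ha1 p q r; omega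
  have e3 : f q r p = 0 := by have := ha2 q p r; omega
  have e4 : f r p q = 0 := by have h := ha1 q r p; have := ha2 r q p; omega
  have e5 : f r q p = 0 := by have := ha2 r p q; omega
  have g1 : f p s q = 0 := by have := ha2 p q s; omega
  have g2 : f q p s = 0 := by have := ha1 p q s; omega
  have g3 : f q s p = 0 := by have := ha2 q p s; omega
  have g4 : f s p q = 0 := by have h := ha1 q s p; have := ha2 s q p; omega
  have g5 : f s q p = 0 := by have := ha2 s p q; omega
  have i1 : f p s r = 0 := by have := ha2 p r s; omega
  have i2 : f r p s = 0 := by have := ha1 p r s; omega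
  have i3 : f r s p = 0 := by have := ha2 r p s; omega
  have i4 : f s p r = 0 := by have h := ha1 r s p; have := ha2 s r p; omega
  have i5 : f s r p = 0 := by have := ha2 s p r; omega
  have j1 : f q s r = 0 := by have := ha2 q r s; omega
  have j2 : f r q s = 0 := by have := ha1 q r s; omega
  have j3 : f r s q = 0 := by have := ha2 r q s; omega
  have j4 : f s q r = 0 := by have h := ha1 r s q; have := ha2 s r q; omega
  have j5 : f s r q = 0 := by have := ha2 s q r; omega
  have d1 := diag1 ⟨ha1, ha2⟩
  have d2 := diag2 ⟨ha1, ha2⟩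
  have d3 := diag3 ⟨ha1, ha2⟩
  funext x y z
  rcases hcover x with hx | hx | hx | hx <;> rcases hcover y with hy | hy | hy | hy <;>
    rcases hcover z with hz | hz | hz | hz <;> subst hx hy hz <;>
    simp [d1, d2, d3, h1, h2, h3, h4, e1, e2, e3, e4, e5, g1, g2, g3, g4, g5,
      i1, i2, i3, i4, i5, j1, j2, j3, j4, j5]
end Helpers

set_option maxHeartbeats 1000000 in
/-- a weak nontrivial linking function on a 4-element set links it in a fan. -/
theorem weak_K4_links_fan {V : Type*} [Fintype V] (hV : Fintype.card V = 4)
    (f : V → V → V → ℤ) (hlin : IsLinkingFun f) (hweak : IsWeak f)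
    (hnt : IsNontrivial f) :
    ∃ p q r s : V, [p, q, r, s].Nodup ∧ ({p, q, r, s} : Set V) = Set.univ ∧
      f = starFun p ({q} : Set V) ({r, s} : Set V) := by
  have e := Fintype.equivFinOfCardEq hV
  have fin4 : ∀ i : Fin 4, i = 0 ∨ i = 1 ∨ i = 2 ∨ i = 3 := by decide
  obtain ⟨a, b, c, d, nab, nac, nad, nbc, nbd, ncd, hcover⟩ :
      ∃ a b c d : V, a ≠ b ∧ a ≠ c ∧ a ≠ d ∧ b ≠ c ∧ b ≠ d ∧ c ≠ d ∧
        ∀ v : V, v = a ∨ v = b ∨ v = c ∨ v = d := by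
    refine ⟨e.symm 0, e.symm 1, e.symm 2, e.symm 3,
      fun h => absurd (e.symm.injective h) (by decide),
      fun h => absurd (e.symm.injective h) (by decide),
      fun h => absurd (e.symm.injective h) (by decide),
      fun h => absurd (e.symm.injective h) (by decide),
      fun h => absurd (e.symm.injective h) (by decide),
      fun h => absurd (e.symm.injective h) (by decide), fun v => ?_⟩
    rcases fin4 (e v) with h | h | h | h
    · exact Or.inl (by rw [← h, Equiv.symm_apply_apply])
    · exact Or.inr (Or.inl (by rw [← h, Equiv.symm_apply_apply]))
    · exact Or.inr (Or.inr (Or.inl (by rw [← h, Equiv.symm_apply_apply])))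
    · exact Or.inr (Or.inr (Or.inr (by rw [← h, Equiv.symm_apply_apply])))
  have nba : b ≠ a := nab.symm
  have nca : c ≠ a := nac.symm
  have nda : d ≠ a := nad.symm
  have ncb : c ≠ b := nbc.symm
  have ndb : d ≠ b := nbd.symm
  have ndc : d ≠ c := ncd.symm
  obtain ⟨⟨ha1, ha2⟩, hcoc⟩ := id hlin
  have CC := hcoc a b c d
  have CCw : f b c d = f a b c - f a b d + f a c d := by omega
  have w1 : |f a b c| ≤ 1 := by
    have h := hweak [a,b,c] ⟨by simp [nab, nac, nbc], by simp⟩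
    rwa [cycleVal3] at h
  have w2 : |f a b d| ≤ 1 := by
    have h := hweak [a,b,d] ⟨by simp [nab, nad, nbd], by simp⟩
    rwa [cycleVal3] at h
  have w3 : |f a c d| ≤ 1 := by
    have h := hweak [a,c,d] ⟨by simp [nac, nad, ncd], by simp⟩
    rwa [cycleVal3] at h
  have w4 : |f b c d| ≤ 1 := by
    have h := hweak [b,c,d] ⟨by simp [nbc, nbd, ncd], by simp⟩
    rwa [cycleVal3] at h
  have w5 : |f a b c + f a c d| ≤ 1 := by
    have h := hweak [a,b,c,d] ⟨by simp [nab, nac, nad, nbc, nbd, ncd], by simp⟩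
    rwa [cycleVal4] at h
  have w6 : |f a b d + f a d c| ≤ 1 := by
    have h := hweak [a,b,d,c] ⟨by simp [nab, nad, nac, nbd, nbc, ndc], by simp⟩
    rwa [cycleVal4] at h
  rw [ha2 a c d] at w6
  have w7 : |f a c b + f a b d| ≤ 1 := by
    have h := hweak [a,c,b,d] ⟨by simp [nac, nab, nad, ncb, ncd, nbd], by simp⟩
    rwa [cycleVal4] at h
  rw [ha2 a b c] at w7
  rw [CCw] at w4
  rw [abs_le] at w1
  rw [abs_le] at w2
  rw [abs_le] at w3
  rw [abs_le] at w4
  rw [abs_le] at w5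
  rw [abs_le] at w6
  rw [abs_le] at w7
  have hne : ¬(f a b c = 0 ∧ f a b d = 0 ∧ f a c d = 0) := by
    rintro ⟨u1, u2, u3⟩
    obtain ⟨C, hC, hCne⟩ := hnt
    exact hCne (by rw [zero_case hlin a b c d hcover u1 u2 u3]; exact cycleVal_zero C)
  have hx3 : f a b c = -1 ∨ f a b c = 0 ∨ f a b c = 1 := by omega
  have hy3 : f a b d = -1 ∨ f a b d = 0 ∨ f a b d = 1 := by omega
  have hz3 : f a c d = -1 ∨ f a c d = 0 ∨ f a c d = 1 := by omega
  rcases hx3 with hx | hx | hx <;> rcases hy3 with hy | hy | hy <;> rcases hz3 with hz | hz | hz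
  · exfalso; omega
  · exact fan_case hlin b a c d
      (fun v => by rcases hcover v with h|h|h|h <;> tauto)
      nba nbc nbd nac nad ncd
      (by norm_num [ha1 a b c, hx]) (by norm_num [ha1 a b d, hy]) (by norm_num [CCw, hx, hy, hz])
  · exfalso; omega
  · exfalso; omega
  · exact fan_case hlin c b a d
      (fun v => by rcases hcover v with h|h|h|h <;> tauto)
      ncb nca ncd nba nbd nad
      (by norm_num [ha1 b c a, ha2 b a c, ha1 a b c, hx]) (by norm_num [ha1 b c d, CCw, hx, hy, hz]) (by norm_num [ha1 a c d, hz])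
  · exact fan_case hlin a c b d
      (fun v => by rcases hcover v with h|h|h|h <;> tauto)
      nac nab nad ncb ncd nbd
      (by norm_num [ha2 a b c, hx]) (by norm_num [hz]) (by norm_num [hy])
  · exfalso; omega
  · exfalso; omega
  · exfalso; omega
  · exact fan_case hlin a d b c
      (fun v => by rcases hcover v with h|h|h|h <;> tauto)
      nad nab nac ndb ndc nbc
      (by norm_num [ha2 a b d, hy]) (by norm_num [ha2 a c d, hz]) (by norm_num [hx])
  · exact fan_case hlin d b a c
      (fun v => by rcases hcover v with h|h|h|h <;> tauto)
      ndb nda ndc nba nbc nac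
      (by norm_num [ha1 b d a, ha2 b a d, ha1 a b d, hy]) (by norm_num [ha1 b d c, ha2 b c d, CCw, hx, hy, hz]) (by norm_num [ha1 a d c, ha2 a c d, hz])
  · exfalso; omega
  · exact fan_case hlin d c a b
      (fun v => by rcases hcover v with h|h|h|h <;> tauto)
      ndc nda ndb nca ncb nab
      (by norm_num [ha1 c d a, ha2 c a d, ha1 a c d, hz]) (by norm_num [ha1 c d b, ha2 c b d, ha1 b c d, CCw, hx, hy, hz]) (by norm_num [ha1 a d b, ha2 a b d, hy])
  · exact absurd ⟨hx, hy, hz⟩ hne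
  · exact fan_case hlin c d a b
      (fun v => by rcases hcover v with h|h|h|h <;> tauto)
      ncd nca ncb nda ndb nab
      (by norm_num [ha2 c a d, ha1 a c d, hz]) (by norm_num [ha2 c b d, ha1 b c d, CCw, hx, hy, hz]) (by norm_num [ha1 a c b, ha2 a b c, hx])
  · exfalso; omega
  · exact fan_case hlin b d a c
      (fun v => by rcases hcover v with h|h|h|h <;> tauto)
      nbd nba nbc nda ndc nac
      (by norm_num [ha2 b a d, ha1 a b d, hy]) (by norm_num [ha2 b c d, CCw, hx, hy, hz]) (by norm_num [ha1 a b c, hx])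
  · exact fan_case hlin d a b c
      (fun v => by rcases hcover v with h|h|h|h <;> tauto)
      nda ndb ndc nab nac nbc
      (by norm_num [ha1 a d b, ha2 a b d, hy]) (by norm_num [ha1 a d c, ha2 a c d, hz]) (by norm_num [ha1 b d c, ha2 b c d, CCw, hx, hy, hz])
  · exfalso; omega
  · exfalso; omega
  · exfalso; omega
  · exact fan_case hlin c a b d
      (fun v => by rcases hcover v with h|h|h|h <;> tauto)
      nca ncb ncd nab nad nbd
      (by norm_num [ha1 a c b, ha2 a b c, hx]) (by norm_num [ha1 a c d, hz]) (by norm_num [ha1 b c d, CCw, hx, hy, hz])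
  · exact fan_case hlin b c a d
      (fun v => by rcases hcover v with h|h|h|h <;> tauto)
      nbc nba nbd nca ncd nad
      (by norm_num [ha2 b a c, ha1 a b c, hx]) (by norm_num [CCw, hx, hy, hz]) (by norm_num [ha1 a b d, hy])
  · exfalso; omega
  · exfalso; omega
  · exact fan_case hlin a b c d
      (fun v => by rcases hcover v with h|h|h|h <;> tauto)
      nab nac nad nbc nbd ncd
      (by norm_num [hx]) (by norm_num [hy]) (by norm_num [hz])
  · exfalso; omega
end

section
/- Let f₁ and f₂ be weak nontrivial linking functions on a finite set V with |V| ≥ 3. Then there is a cycle C in the complete graph on V of length at most 4 with f₁(C) ≠ 0 and f₂(C) ≠ 0. -/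
open scoped Classical

section Helpers

variable {V : Type*}

lemma isAlt.self₁ {f : V → V → V → ℤ} (hf : IsAlt f) (a b : V) : f a a b = 0 := by
  have := hf.1 a a b; omega

lemma isAlt.self₂ {f : V → V → V → ℤ} (hf : IsAlt f) (a b : V) : f a b b = 0 := by
  have := hf.2 a b b; omega

lemma isAlt.self₃ {f : V → V → V → ℤ} (hf : IsAlt f) (a b : V) : f a b a = 0 := by
  have h1 := hf.2 a b a
  have h2 := isAlt.self₁ hf a b
  omega

lemma pivot {f : V → V → V → ℤ} (hc : IsCocycle f) (r a b c : V) :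
    f a b c = f r b c - f r a c + f r a b := by
  have := hc r a b c; omega

lemma exists_triple_ne_zero {f : V → V → V → ℤ} (h : IsNontrivial f) :
    ∃ a b c, f a b c ≠ 0 := by
  by_contra h0
  push_neg at h0
  obtain ⟨C, _, hC⟩ := h
  apply hC
  cases C with
  | nil => rfl
  | cons v rest => simp [cycleVal, h0]

lemma exists_edge {f : V → V → V → ℤ} (hc : IsCocycle f) (h : IsNontrivial f) (r : V) :
    ∃ x y, f r x y ≠ 0 := by
  by_contra h0
  push_neg at h0
  obtain ⟨a, b, c, habc⟩ := exists_triple_ne_zero h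
  apply habc
  rw [pivot hc r a b c, h0, h0, h0]; ring

lemma cycleVal_triple (f : V → V → V → ℤ) (a b c : V) :
    cycleVal f [a, b, c] = f a b c := by
  simp [cycleVal]

lemma cycleVal_quad (f : V → V → V → ℤ) (a b c d : V) :
    cycleVal f [a, b, c, d] = f a b c + f a c d := by
  simp [cycleVal, Finset.sum_range_succ]

lemma edge_ne {f : V → V → V → ℤ} (hf : IsAlt f) {r x y : V} (h : f r x y ≠ 0) :
    x ≠ y ∧ r ≠ x ∧ r ≠ y := by
  refine ⟨?_, ?_, ?_⟩
  · rintro rfl; exact h (isAlt.self₂ hf r x)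
  · rintro rfl; exact h (isAlt.self₁ hf r y)
  · rintro rfl; exact h (isAlt.self₃ hf r x)

end Helpers

/-- two weak nontrivial linking functions admit a common linking cycle
of length at most 4. -/
theorem common_linking_cycle {V : Type*} [Fintype V] (hV : 3 ≤ Fintype.card V)
    (f₁ f₂ : V → V → V → ℤ)
    (hlin₁ : IsLinkingFun f₁) (hlin₂ : IsLinkingFun f₂)
    (hweak₁ : IsWeak f₁) (hweak₂ : IsWeak f₂)
    (hnt₁ : IsNontrivial f₁) (hnt₂ : IsNontrivial f₂) :
    ∃ C : List V, IsCycle C ∧ C.length ≤ 4 ∧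
      cycleVal f₁ C ≠ 0 ∧ cycleVal f₂ C ≠ 0 := by
  have hpos : 0 < Fintype.card V := by omega
  obtain ⟨r⟩ := Fintype.card_pos_iff.mp hpos
  obtain ⟨halt₁, hcoc₁⟩ := hlin₁
  obtain ⟨halt₂, hcoc₂⟩ := hlin₂
  obtain ⟨x₁, y₁, he₁⟩ := exists_edge hcoc₁ hnt₁ r
  obtain ⟨x₂, y₂, he₂⟩ := exists_edge hcoc₂ hnt₂ r
  by_cases hA : ∃ x y, f₁ r x y ≠ 0 ∧ f₂ r x y ≠ 0
  · -- common edge: triangle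
    obtain ⟨x, y, h1, h2⟩ := hA
    obtain ⟨hxy, hrx, hry⟩ := edge_ne halt₁ h1
    refine ⟨[r, x, y], ⟨by simp [hrx, hry, hxy], by simp⟩, by simp, ?_, ?_⟩
    · rw [cycleVal_triple]; exact h1
    · rw [cycleVal_triple]; exact h2
  · push_neg at hA
    by_cases hB : ∃ v a b, f₁ r v a ≠ 0 ∧ f₂ r v b ≠ 0
    · -- common vertex: 4-cycle through r
      obtain ⟨v, a, b, h1, h2⟩ := hB
      obtain ⟨hva, hrv, hra⟩ := edge_ne halt₁ h1
      obtain ⟨hvb, -, hrb⟩ := edge_ne halt₂ h2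
      have hba : b ≠ a := by
        rintro rfl; exact h2 (hA v b h1)
      have h2' : f₂ r b v ≠ 0 := by
        have := halt₂.2 r b v; omega
      have h1' : f₁ r b v = 0 := by
        by_contra h
        exact h2' (hA b v h)
      have h2'' : f₂ r v a = 0 := hA v a h1
      refine ⟨[r, b, v, a], ⟨by simp [hrb, hrv, hra, hvb.symm, hba, hva],
        by simp⟩, by simp, ?_, ?_⟩
      · rw [cycleVal_quad, h1']; simpa using h1
      · rw [cycleVal_quad, h2'']; simpa using h2'
    · -- disjoint supports: 4-cycle avoiding r
      push_neg at hB
      -- touched-by-1 vertices carry no 2-edges and vice versa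
      have hx₁ : ∀ w, f₂ r x₁ w = 0 := fun w => hB x₁ y₁ w he₁
      have he₁' : f₁ r y₁ x₁ ≠ 0 := by have := halt₁.2 r y₁ x₁; omega
      have hy₁ : ∀ w, f₂ r y₁ w = 0 := fun w => hB y₁ x₁ w he₁'
      have hx₂ : ∀ w, f₁ r x₂ w = 0 := by
        intro w
        by_contra h
        exact he₂ (hB x₂ w y₂ h)
      have he₂' : f₂ r y₂ x₂ ≠ 0 := by have := halt₂.2 r y₂ x₂; omega
      have hy₂ : ∀ w, f₁ r y₂ w = 0 := by
        intro w
        by_contra h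
        exact he₂' (hB y₂ w x₂ h)
      obtain ⟨hxy₁, -, -⟩ := edge_ne halt₁ he₁
      obtain ⟨hxy₂, -, -⟩ := edge_ne halt₂ he₂
      have h12 : x₁ ≠ x₂ := by rintro rfl; exact he₁ (hx₂ y₁)
      have h13 : x₁ ≠ y₂ := by rintro rfl; exact he₁ (hy₂ y₁)
      have h23 : y₁ ≠ x₂ := by rintro rfl; exact he₁' (hx₂ x₁)
      have h24 : y₁ ≠ y₂ := by rintro rfl; exact he₁' (hy₂ x₁)
      refine ⟨[x₁, y₁, x₂, y₂], ⟨by simp [hxy₁, hxy₂, h12, h13, h23, h24],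
        by simp⟩, by simp, ?_, ?_⟩
      · rw [cycleVal_quad, pivot hcoc₁ r x₁ y₁ x₂, pivot hcoc₁ r x₁ x₂ y₂]
        have z1 : f₁ r y₁ x₂ = 0 := by
          have := halt₁.2 r y₁ x₂
          have := hx₂ y₁
          omega
        have z2 : f₁ r x₂ y₂ = 0 := hx₂ y₂
        have z3 : f₁ r x₁ y₂ = 0 := by
          have := halt₁.2 r x₁ y₂
          have := hy₂ x₁
          omega
        rw [z1, z2, z3]
        simpa using he₁
      · rw [cycleVal_quad, pivot hcoc₂ r x₁ y₁ x₂, pivot hcoc₂ r x₁ x₂ y₂]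
        have z1 : f₂ r y₁ x₂ = 0 := hy₁ x₂
        have z2 : f₂ r x₁ x₂ = 0 := hx₁ x₂
        have z3 : f₂ r x₁ y₂ = 0 := hx₁ y₂
        have z4 : f₂ r x₁ y₁ = 0 := hx₁ y₁
        rw [z1, z2, z3, z4]
        simpa using he₂
end

section
/- Theta-curve theorem (combinatorial form): Let n ≥ 3, let V be a finite set with |V| = n, and let f₁, f₂, f₃ be weak linking functions on V with f₁ + f₂ + f₃ = 0 (as functions on V³) and with some f_i nontrivial. Then, after possibly replacing each f_i by −f_i simultaneously, exactly one of the following holds. (A1) There are a vertex p ∈ V and pairwise disjoint sets I₁, I₂, I₃ (at most one of them empty) with I₁ ∪ I₂ ∪ I₃ = V − {p}, such that for each i, f_i is the star function pO_iI_i where O_i is the union of the other two sets I_j (and f_i = 0 if I_i = ∅). (A2) n ≥ 5 and there are distinct vertices p₁,p₂,p₃ ∈ V such that, with I = V − {p₁,p₂,p₃}, each f_i is the star function p_i{p_j,p_k}I, where {i,j,k} = {1,2,3}. -/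
/-!
For any vertex `p`, a linking function `f` is the coboundary of its edge function
`f(p, ·, ·)`. Weakness, tested on triangles, squares and pentagons through `p`, forces this
edge function to be `starEdge O I` for two disjoint sets `O`, `I`; so `f` is the tripartite
function of the partition `(O, I, rest)`, which is invariant under rotating the three parts,
and a hexagon visiting each part twice shows that one part is a single vertex: `f` is a star.

If all three stars vanish on the triangles avoiding some vertex `v`, each can be rewritten
with apex `v`. On the triangles through `v` the relation `f₁ + f₂ + f₃ = 0` says that the
number of sets `Iⱼ` containing a vertex is constant; it is `1` (case (A1)) or `2` (case (A1)
for `-fⱼ`, with the roles of `Oⱼ` and `Iⱼ` exchanged). Otherwise the apexes `pⱼ` are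
distinct, and `fᵢ`, vanishing on the triangles avoiding both other apexes, is
`±pᵢ{pⱼ, pₖ}T` with `T = V - {p₁, p₂, p₃}`. Evaluating the relation on two triangles makes the
signs agree, and `T` has two vertices, as a single vertex of `T` would be common to all
three: case (A2).
-/

open scoped Classical

section LinkingFunctions

variable {V : Type*} {f : V → V → V → ℤ}

lemma IsAlt.apply_self_left (hf : IsAlt f) (a c : V) : f a a c = 0 := by
  have := hf.1 a a c; omega

lemma IsAlt.apply_self_right (hf : IsAlt f) (a b : V) : f a b b = 0 := by
  have := hf.2 a b b; omega

lemma IsAlt.apply_self_outer (hf : IsAlt f) (a b : V) : f a b a = 0 := by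
  have := hf.2 a b a; have := hf.apply_self_left a b; omega

lemma IsAlt.pairwise_ne_of_apply_ne_zero (hf : IsAlt f) {a b c : V} (h : f a b c ≠ 0) :
    a ≠ b ∧ a ≠ c ∧ b ≠ c := by
  refine ⟨?_, ?_, ?_⟩ <;> rintro rfl
  exacts [h (hf.apply_self_left _ _), h (hf.apply_self_outer _ _), h (hf.apply_self_right _ _)]

lemma IsLinkingFun.neg (hf : IsLinkingFun f) : IsLinkingFun (fun a b c => -f a b c) :=
  ⟨⟨fun a b c => by simp [hf.1.1 a b c], fun a b c => by simp [hf.1.2 a b c]⟩,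
    fun a b c d => by have := hf.2 a b c d; dsimp only; omega⟩

lemma cycleVal_pair (v a : V) : cycleVal f [v, a] = 0 := by
  simp [cycleVal]

lemma cycleVal_cons_cons_cons (v a b : V) (l : List V) :
    cycleVal f (v :: a :: b :: l) = f v a b + cycleVal f (v :: b :: l) := by
  simp only [cycleVal, List.length_cons, Nat.add_sub_cancel, Finset.sum_range_succ']
  rw [add_comm]
  rfl

lemma cycleVal_neg (l : List V) : cycleVal (fun a b c => -f a b c) l = -cycleVal f l := by
  cases l <;> simp [cycleVal]

lemma IsWeak.neg (hw : IsWeak f) : IsWeak (fun a b c => -f a b c) := fun C hC => by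
  rw [cycleVal_neg, abs_neg]; exact hw C hC

lemma IsNontrivial.exists_apply_ne_zero (hnt : IsNontrivial f) : ∃ a b c, f a b c ≠ 0 := by
  obtain ⟨_ | ⟨v, l⟩, -, hC⟩ := hnt
  · simp [cycleVal] at hC
  · obtain ⟨i, -, hi⟩ := Finset.exists_ne_zero_of_sum_ne_zero hC
    exact ⟨_, _, _, hi⟩

lemma IsWeak.abs_le_one (hf : IsAlt f) (hw : IsWeak f) (a b c : V) : |f a b c| ≤ 1 := by
  by_cases h : f a b c = 0
  · simp [h]
  obtain ⟨hab, hac, hbc⟩ := hf.pairwise_ne_of_apply_ne_zero h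
  simpa [cycleVal_cons_cons_cons, cycleVal_pair] using
    hw [a, b, c] ⟨by simp [hab, hac, hbc], by simp⟩

lemma eq_zero_of_not_isNontrivial (hf : IsAlt f) (hnt : ¬IsNontrivial f) (a b c : V) :
    f a b c = 0 := by
  by_contra h
  obtain ⟨hab, hac, hbc⟩ := hf.pairwise_ne_of_apply_ne_zero h
  exact hnt ⟨[a, b, c], ⟨by simp [hab, hac, hbc], by simp⟩, by
    simpa [cycleVal_cons_cons_cons, cycleVal_pair] using h⟩

def coboundary (g : V → V → ℤ) (a b c : V) : ℤ := g b c - g a c + g a b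

lemma IsLinkingFun.eq_coboundary (hf : IsLinkingFun f) (p : V) : f = coboundary (f p) := by
  ext a b c
  have := hf.2 p a b c
  simp only [coboundary]; omega

lemma coboundary_congr {g g' : V → V → ℤ} (h : V → ℤ) (hg : ∀ u v, g u v = g' u v + h v - h u) :
    coboundary g = coboundary g' := by
  ext a b c; simp only [coboundary, hg]; ring

end LinkingFunctions

section StarFunctions

variable {V : Type*}

def IsTripartition (A B C : Set V) : Prop :=
  ∀ v, (v ∈ A ∧ v ∉ B ∧ v ∉ C) ∨ (v ∉ A ∧ v ∈ B ∧ v ∉ C) ∨ (v ∉ A ∧ v ∉ B ∧ v ∈ C)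

namespace IsTripartition

variable {A B C : Set V}

lemma rotate (h : IsTripartition A B C) : IsTripartition B C A := fun v => by
  rcases h v with h | h | h <;> tauto

lemma swap (h : IsTripartition A B C) : IsTripartition A C B := fun v => by
  rcases h v with h | h | h <;> tauto

lemma notMem_mid_of_mem_left (h : IsTripartition A B C) {v : V} (hv : v ∈ A) : v ∉ B := by
  rcases h v with h | h | h <;> tauto

lemma notMem_right_of_mem_left (h : IsTripartition A B C) {v : V} (hv : v ∈ A) : v ∉ C := by
  rcases h v with h | h | h <;> tauto

lemma notMem_right_of_mem_mid (h : IsTripartition A B C) {v : V} (hv : v ∈ B) : v ∉ C := by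
  rcases h v with h | h | h <;> tauto

lemma right_eq_compl (h : IsTripartition A B C) : C = (A ∪ B)ᶜ := by
  ext v; rcases h v with h | h | h <;> simp [h]

lemma mem_mid_iff {p v : V} (h : IsTripartition {p} B C) : v ∈ B ↔ v ≠ p ∧ v ∉ C := by
  rcases h v with h | h | h <;> simp only [Set.mem_singleton_iff] at h <;> tauto

end IsTripartition

lemma IsStarPartition.isTripartition {p : V} {O I : Set V} (h : IsStarPartition p O I) :
    IsTripartition {p} O I := by
  obtain ⟨-, -, hpO, hpI, hOI, hcov⟩ := h
  intro v
  have hv : v ∈ insert p (O ∪ I) := hcov ▸ Set.mem_univ v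
  rcases hv with rfl | hv | hv
  · simp [hpO, hpI]
  · have : v ≠ p := by rintro rfl; exact hpO hv
    simp [hv, this, Set.disjoint_left.mp hOI hv]
  · have : v ≠ p := by rintro rfl; exact hpI hv
    simp [hv, this, Set.disjoint_right.mp hOI hv]

lemma IsTripartition.isStarPartition {p : V} {O I : Set V} (h : IsTripartition {p} O I)
    (hO : O.Nonempty) (hI : I.Nonempty) : IsStarPartition p O I := by
  refine ⟨hO, hI, h.notMem_mid_of_mem_left rfl, h.notMem_right_of_mem_left rfl,
    Set.disjoint_left.mpr fun _ ↦ h.notMem_right_of_mem_mid, ?_⟩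
  ext v; rcases h v with h | h | h <;> simp_all

lemma starFun_swap (p : V) (O I : Set V) (a b c : V) :
    starFun p I O a b c = -starFun p O I a b c := by
  simp only [starFun, starEdge, and_comm]
  split_ifs <;> ring

lemma neg_one_mul_starFun (p : V) (O I : Set V) :
    (fun a b c => -1 * starFun p O I a b c) = starFun p I O := by
  ext a b c; rw [starFun_swap]; ring

lemma starFun_empty_left (p : V) (I : Set V) : starFun p ∅ I = 0 := by
  ext; simp [starFun, starEdge]

lemma starFun_empty_right (p : V) (O : Set V) : starFun p O ∅ = 0 := by
  ext; simp [starFun, starEdge]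

lemma starFun_apex_eq_one {p o i : V} {O I : Set V} (hpO : p ∉ O) (hpI : p ∉ I)
    (hOI : Disjoint O I) (ho : o ∈ O) (hi : i ∈ I) : starFun p O I p o i = 1 := by
  have hoI : o ∉ I := Set.disjoint_left.mp hOI ho
  have hop : o ≠ p := by rintro rfl; exact hpO ho
  have hip : i ≠ p := by rintro rfl; exact hpI hi
  simp [starFun, starEdge, ho, hi, hoI, hop, hip]

lemma starFun_apex_compl_eq_one {p o y : V} {O S : Set V} (hpO : p ∉ O) (hpS : p ∈ S)
    (hOS : O ⊆ S) (ho : o ∈ O) (hy : y ∉ S) : starFun p O Sᶜ p o y = 1 :=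
  starFun_apex_eq_one hpO (by simpa using hpS) (Set.disjoint_compl_right_iff_subset.mpr hOS) ho hy

lemma IsStarPartition.starFun_apex_eq_one {q o i : V} {O I : Set V} (h : IsStarPartition q O I)
    (ho : o ∈ O) (hi : i ∈ I) : starFun q O I q o i = 1 :=
  _root_.starFun_apex_eq_one h.2.2.1 h.2.2.2.1 h.2.2.2.2.1 ho hi

lemma starFun_apex_eq_sub {p u v : V} {O I : Set V} (h : IsTripartition {p} O I)
    (hu : u ≠ p) (hv : v ≠ p) :
    starFun p O I p u v = (if v ∈ I then 1 else 0) - (if u ∈ I then 1 else 0) := by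
  rcases h u with hu' | hu' | hu' <;> rcases h v with hv' | hv' | hv' <;>
    simp_all [starFun, starEdge]

lemma starEdge_eq_rotate {A B C : Set V} (h : IsTripartition A B C) (u v : V) :
    starEdge B C u v =
      starEdge C A u v + (if v ∈ C then 1 else 0) - (if u ∈ C then 1 else 0) := by
  rcases h u with hu | hu | hu <;> rcases h v with hv | hv | hv <;> simp [starEdge, hu, hv]

lemma coboundary_starEdge_rotate {A B C : Set V} (h : IsTripartition A B C) :
    coboundary (starEdge B C) = coboundary (starEdge C A) :=
  coboundary_congr _ (starEdge_eq_rotate h)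

lemma starFun_eq_coboundary {p : V} {O I : Set V} (h : IsTripartition {p} O I) :
    starFun p O I = coboundary (starEdge O I) := by
  have hp : p ∉ O ∧ p ∉ I := ⟨h.notMem_mid_of_mem_left rfl, h.notMem_right_of_mem_left rfl⟩
  ext a b c
  rcases h a with ha | ha | ha <;> rcases h b with hb | hb | hb <;>
    rcases h c with hc | hc | hc <;> simp only [Set.mem_singleton_iff] at ha hb hc <;>
    simp [starFun, starEdge, coboundary, ha, hb, hc, hp]

lemma starFun_singleton_left {p q : V} {I : Set V} (h : IsTripartition {p} {q} I) :
    starFun p {q} I = starFun q I {p} := by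
  rw [starFun_eq_coboundary h, starFun_eq_coboundary h.rotate, coboundary_starEdge_rotate h]

lemma starFun_singleton_right {p q : V} {O : Set V} (h : IsTripartition {p} O {q}) :
    starFun p O {q} = starFun q {p} O := by
  rw [starFun_eq_coboundary h, starFun_eq_coboundary h.rotate.rotate,
    coboundary_starEdge_rotate h, coboundary_starEdge_rotate h.rotate]

end StarFunctions

section VanishesAwayFrom

variable {V : Type*}

def VanishesAwayFrom (f : V → V → V → ℤ) (S : Set V) : Prop :=
  ∀ a b c, a ∉ S → b ∉ S → c ∉ S → f a b c = 0

lemma VanishesAwayFrom.of_add_add_eq_zero {f g h : V → V → V → ℤ} {S T : Set V}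
    (hsum : ∀ a b c, f a b c + g a b c + h a b c = 0)
    (hg : VanishesAwayFrom g S) (hh : VanishesAwayFrom h T) : VanishesAwayFrom f (S ∪ T) := by
  intro a b c ha hb hc
  simp only [Set.mem_union, not_or] at ha hb hc
  have := hsum a b c
  rw [hg a b c ha.1 hb.1 hc.1, hh a b c ha.2 hb.2 hc.2] at this
  omega

lemma starFun_vanishesAwayFrom (p : V) (O I : Set V) : VanishesAwayFrom (starFun p O I) {p} := by
  intro a b c ha hb hc
  simp_all [starFun]

lemma starFun_vanishesAwayFrom_of_left_subset {p : V} {O I S : Set V} (hO : O ⊆ S) :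
    VanishesAwayFrom (starFun p O I) S := by
  intro a b c ha hb hc
  have : a ∉ O ∧ b ∉ O ∧ c ∉ O := ⟨fun h => ha (hO h), fun h => hb (hO h), fun h => hc (hO h)⟩
  simp [starFun, starEdge, this]

lemma starFun_vanishesAwayFrom_of_right_subset {p : V} {O I S : Set V} (hI : I ⊆ S) :
    VanishesAwayFrom (starFun p O I) S := by
  intro a b c ha hb hc
  have : a ∉ I ∧ b ∉ I ∧ c ∉ I := ⟨fun h => ha (hI h), fun h => hb (hI h), fun h => hc (hI h)⟩
  simp [starFun, starEdge, this]

lemma IsStarPartition.vanishesAwayFrom_iff {q v : V} {O I : Set V} (h : IsStarPartition q O I)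
    (hv : v ≠ q) : VanishesAwayFrom (starFun q O I) {v} ↔ O = {v} ∨ I = {v} := by
  refine ⟨fun hvan => ?_, ?_⟩
  · by_contra! hOI
    obtain ⟨o, ho, hov⟩ := Set.not_subset.mp fun hO => hOI.1 ((h.1.subset_singleton_iff).mp hO)
    obtain ⟨i, hi, hiv⟩ := Set.not_subset.mp fun hI => hOI.2 ((h.2.1.subset_singleton_iff).mp hI)
    have := hvan q o i (by simpa using hv.symm) hov hiv
    rw [h.starFun_apex_eq_one ho hi] at this
    exact one_ne_zero this
  · rintro (rfl | rfl)
    exacts [starFun_vanishesAwayFrom_of_left_subset subset_rfl,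
      starFun_vanishesAwayFrom_of_right_subset subset_rfl]

end VanishesAwayFrom

section WeakLinkingFunctions

variable {V : Type*} {f : V → V → V → ℤ} {p : V}

lemma IsWeak.eq_of_apply_eq_one_of_apply_eq_one (hf : IsAlt f) (hw : IsWeak f) {x y z : V}
    (hxy : f p x y = 1) (hyz : f p y z = 1) : x = z := by
  by_contra hxz
  obtain ⟨hpx, hpy, hxy'⟩ := hf.pairwise_ne_of_apply_ne_zero (hxy ▸ one_ne_zero)
  obtain ⟨-, hpz, hyz'⟩ := hf.pairwise_ne_of_apply_ne_zero (hyz ▸ one_ne_zero)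
  have := hw [p, x, y, z] ⟨by simp [*], by simp⟩
  simp [cycleVal_cons_cons_cons, cycleVal_pair, hxy, hyz] at this

def apexOut (f : V → V → V → ℤ) (p : V) : Set V := {x | ∃ y, f p x y = 1}

def apexIn (f : V → V → V → ℤ) (p : V) : Set V := {y | ∃ x, f p x y = 1}

lemma apex_notMem_apexOut (hf : IsAlt f) : p ∉ apexOut f p := by
  rintro ⟨y, hy⟩; simp [hf.apply_self_left] at hy

lemma apex_notMem_apexIn (hf : IsAlt f) : p ∉ apexIn f p := by
  rintro ⟨x, hx⟩; simp [hf.apply_self_outer] at hx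

lemma IsWeak.disjoint_apexOut_apexIn (hf : IsAlt f) (hw : IsWeak f) :
    Disjoint (apexOut f p) (apexIn f p) := by
  refine Set.disjoint_left.mpr fun x ⟨y, hxy⟩ ⟨u, hux⟩ => ?_
  obtain rfl := hw.eq_of_apply_eq_one_of_apply_eq_one hf hux hxy
  have := hf.2 p u x
  omega

lemma IsWeak.apply_eq_one_of_mem_apexOut_of_mem_apexIn (hf : IsAlt f) (hw : IsWeak f) {x y : V}
    (hx : x ∈ apexOut f p) (hy : y ∈ apexIn f p) : f p x y = 1 := by
  obtain ⟨y', hxy'⟩ := id hx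
  obtain ⟨x', hx'y⟩ := id hy
  have hyx := hf.2 p x y
  have hbound := abs_le.mp (hw.abs_le_one hf p x y)
  by_contra hne
  by_cases hneg : f p x y = -1
  · obtain rfl := hw.eq_of_apply_eq_one_of_apply_eq_one hf (by omega : f p y x = 1) hxy'
    omega
  -- `f(p, x, y) = 0`, so the pentagon `p x' y x y'` has value `2`
  have hOI := Set.disjoint_left.mp (hw.disjoint_apexOut_apexIn hf (p := p))
  have hx' : x' ∈ apexOut f p := ⟨y, hx'y⟩
  have hy' : y' ∈ apexIn f p := ⟨x, hxy'⟩
  have hxx' : x' ≠ x := by rintro rfl; omega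
  have hyy' : y ≠ y' := by rintro rfl; omega
  have hpO := apex_notMem_apexOut hf (p := p)
  have hpI := apex_notMem_apexIn hf (p := p)
  have := hw [p, x', y, x, y'] ⟨by simp; grind, by simp⟩
  simp [cycleVal_cons_cons_cons, cycleVal_pair, hx'y, hxy', show f p y x = 0 by omega] at this

lemma IsWeak.apply_apex_eq_starEdge (hf : IsAlt f) (hw : IsWeak f) (u v : V) :
    f p u v = starEdge (apexOut f p) (apexIn f p) u v := by
  have hdisj := hw.disjoint_apexOut_apexIn hf (p := p)
  have hvu := hf.2 p u v
  have hbound := abs_le.mp (hw.abs_le_one hf p u v)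
  by_cases hpos : f p u v = 1
  · have hu : u ∈ apexOut f p := ⟨v, hpos⟩
    simp [starEdge, hpos, hu, Set.disjoint_left.mp hdisj hu, show v ∈ apexIn f p from ⟨u, hpos⟩]
  by_cases hneg : f p u v = -1
  · have hv : v ∈ apexOut f p := ⟨u, by omega⟩
    simp [starEdge, hneg, hv, Set.disjoint_left.mp hdisj hv,
      show u ∈ apexIn f p from ⟨v, by omega⟩]
  have huv : ¬(u ∈ apexOut f p ∧ v ∈ apexIn f p) := fun h =>
    hpos (hw.apply_eq_one_of_mem_apexOut_of_mem_apexIn hf h.1 h.2)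
  have hvu' : ¬(u ∈ apexIn f p ∧ v ∈ apexOut f p) := fun h => by
    have := hw.apply_eq_one_of_mem_apexOut_of_mem_apexIn hf h.2 h.1; omega
  simp only [starEdge, if_neg huv, if_neg hvu']
  omega

end WeakLinkingFunctions

section Classification

variable {V : Type*} {f : V → V → V → ℤ}

lemma not_isWeak_coboundary_starEdge {O I : Set V} (hOI : Disjoint O I) {o₁ o₂ i₁ i₂ r₁ r₂ : V}
    (ho₁ : o₁ ∈ O) (ho₂ : o₂ ∈ O) (hi₁ : i₁ ∈ I) (hi₂ : i₂ ∈ I) (hr₁ : r₁ ∉ O ∪ I)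
    (hr₂ : r₂ ∉ O ∪ I) (ho : o₁ ≠ o₂) (hi : i₁ ≠ i₂) (hr : r₁ ≠ r₂) :
    ¬IsWeak (coboundary (starEdge O I)) := by
  intro hw
  have hoI := fun o (h : o ∈ O) => Set.disjoint_left.mp hOI h
  simp only [Set.mem_union, not_or] at hr₁ hr₂
  have := hw [o₁, i₁, r₁, o₂, i₂, r₂] ⟨by simp; grind (splits := 20), by simp⟩
  simp [cycleVal_cons_cons_cons, cycleVal_pair, coboundary, starEdge, ho₁, ho₂, hi₁, hi₂, hr₁, hr₂,
    hoI _ ho₁, hoI _ ho₂] at this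

lemma IsWeak.exists_starFun_of_apply_eq_one (hf : IsLinkingFun f) (hw : IsWeak f) {p q r : V}
    (hpqr : f p q r = 1) : ∃ a O I, IsStarPartition a O I ∧ f = starFun a O I := by
  set O := apexOut f p
  set I := apexIn f p
  set R := (O ∪ I)ᶜ
  have hOI : Disjoint O I := hw.disjoint_apexOut_apexIn hf.1
  have hR : IsTripartition R O I := fun v => by
    by_cases hO : v ∈ O
    · simp [R, hO, Set.disjoint_left.mp hOI hO]
    · by_cases hI : v ∈ I <;> simp [R, hO, hI]
  have hfeq : f = coboundary (starEdge O I) := by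
    rw [hf.eq_coboundary p]
    congr 1
    ext u v
    exact hw.apply_apex_eq_starEdge hf.1 u v
  have hq : q ∈ O := ⟨r, hpqr⟩
  have hr : r ∈ I := ⟨q, hpqr⟩
  have hp : p ∈ R := fun h => h.elim (apex_notMem_apexOut hf.1) (apex_notMem_apexIn hf.1)
  by_cases hRp : R ⊆ {p}
  · rw [(Set.nonempty_of_mem hp).subset_singleton_iff] at hRp
    rw [hRp] at hR
    exact ⟨p, O, I, hR.isStarPartition ⟨q, hq⟩ ⟨r, hr⟩, hfeq.trans (starFun_eq_coboundary hR).symm⟩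
  by_cases hOq : O ⊆ {q}
  · rw [(Set.nonempty_of_mem hq).subset_singleton_iff] at hOq
    have hR' : IsTripartition {q} I R := hOq ▸ hR.rotate
    refine ⟨q, I, R, hR'.isStarPartition ⟨r, hr⟩ ⟨p, hp⟩, ?_⟩
    rw [hfeq, coboundary_starEdge_rotate hR, starFun_eq_coboundary hR']
  by_cases hIr : I ⊆ {r}
  · rw [(Set.nonempty_of_mem hr).subset_singleton_iff] at hIr
    have hR' : IsTripartition {r} R O := hIr ▸ hR.rotate.rotate
    refine ⟨r, R, O, hR'.isStarPartition ⟨p, hp⟩ ⟨q, hq⟩, ?_⟩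
    rw [hfeq, coboundary_starEdge_rotate hR, coboundary_starEdge_rotate hR.rotate,
      starFun_eq_coboundary hR']
  obtain ⟨s, hs, hsp⟩ := Set.not_subset.mp hRp
  obtain ⟨o, ho, hoq⟩ := Set.not_subset.mp hOq
  obtain ⟨i, hi, hir⟩ := Set.not_subset.mp hIr
  exact absurd (hfeq ▸ hw) (not_isWeak_coboundary_starEdge hOI hq ho hr hi hp hs
    (Ne.symm hoq) (Ne.symm hir) (Ne.symm hsp))

lemma IsWeak.exists_starFun (hf : IsLinkingFun f) (hw : IsWeak f) (hnt : IsNontrivial f) :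
    ∃ p O I, IsStarPartition p O I ∧ f = starFun p O I := by
  obtain ⟨p, q, r, hpqr⟩ := hnt.exists_apply_ne_zero
  rcases abs_le.mp (hw.abs_le_one hf.1 p q r) with ⟨h₁, h₂⟩
  by_cases hpos : f p q r = 1
  · exact hw.exists_starFun_of_apply_eq_one hf hpos
  obtain ⟨p', O, I, hs, heq⟩ :=
    hw.neg.exists_starFun_of_apply_eq_one hf.neg (p := p) (q := q) (r := r)
      (show -f p q r = 1 by omega)
  refine ⟨p', I, O, hs.isTripartition.swap.isStarPartition hs.2.1 hs.1, ?_⟩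
  ext a b c
  rw [starFun_swap, ← congrFun₃ heq a b c, neg_neg]

end Classification

section CommonApex

variable {V : Type*} {f : V → V → V → ℤ}

lemma IsStarPartition.exists_starFun_eq_of_vanishesAwayFrom {q v : V} {O I : Set V}
    (h : IsStarPartition q O I) (hv : VanishesAwayFrom (starFun q O I) {v}) :
    ∃ O' I', IsTripartition {v} O' I' ∧ starFun q O I = starFun v O' I' := by
  by_cases hvq : v = q
  · exact ⟨O, I, hvq ▸ h.isTripartition, hvq ▸ rfl⟩
  rcases (h.vanishesAwayFrom_iff hvq).mp hv with rfl | rfl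
  · exact ⟨I, {q}, h.isTripartition.rotate, starFun_singleton_left h.isTripartition⟩
  · exact ⟨{q}, O, h.isTripartition.rotate.rotate, starFun_singleton_right h.isTripartition⟩

lemma IsWeak.exists_starFun_eq_of_vanishesAwayFrom (hf : IsLinkingFun f) (hw : IsWeak f) {v : V}
    (hv : VanishesAwayFrom f {v}) : ∃ O I, IsTripartition {v} O I ∧ f = starFun v O I := by
  by_cases hnt : IsNontrivial f
  · obtain ⟨q, O, I, h, rfl⟩ := hw.exists_starFun hf hnt
    exact h.exists_starFun_eq_of_vanishesAwayFrom hv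
  · refine ⟨{v}ᶜ, ∅, fun u => by by_cases hu : u = v <;> simp [hu], ?_⟩
    ext a b c
    simp [starFun_empty_right, eq_zero_of_not_isNontrivial hf.1 hnt]

lemma IsNontrivial.nonempty_of_eq_starFun {p : V} {O I : Set V}
    (hnt : IsNontrivial (starFun p O I)) : O.Nonempty ∧ I.Nonempty := by
  obtain ⟨a, b, c, h⟩ := hnt.exists_apply_ne_zero
  constructor <;> by_contra hne <;> rw [Set.not_nonempty_iff_eq_empty] at hne <;> subst hne
  exacts [h (by simp [starFun_empty_left]), h (by simp [starFun_empty_right])]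

/-- Alternative (A1) of the theorem. -/
def IsCommonApexTriple (g₁ g₂ g₃ : V → V → V → ℤ) : Prop :=
  ∃ (p : V) (I₁ I₂ I₃ : Set V),
    Disjoint I₁ I₂ ∧ Disjoint I₁ I₃ ∧ Disjoint I₂ I₃ ∧
    I₁ ∪ I₂ ∪ I₃ = ({p} : Set V)ᶜ ∧
    ¬(I₁ = ∅ ∧ I₂ = ∅) ∧ ¬(I₁ = ∅ ∧ I₃ = ∅) ∧ ¬(I₂ = ∅ ∧ I₃ = ∅) ∧
    g₁ = starFun p (I₂ ∪ I₃) I₁ ∧ g₂ = starFun p (I₁ ∪ I₃) I₂ ∧ g₃ = starFun p (I₁ ∪ I₂) I₃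

noncomputable def memCount (I₁ I₂ I₃ : Set V) (v : V) : ℤ :=
  (if v ∈ I₁ then 1 else 0) + (if v ∈ I₂ then 1 else 0) + (if v ∈ I₃ then 1 else 0)

variable {p : V} {O₁ I₁ O₂ I₂ O₃ I₃ : Set V}

lemma isCommonApexTriple_of_memCount_eq_one (h₁ : IsTripartition {p} O₁ I₁)
    (h₂ : IsTripartition {p} O₂ I₂) (h₃ : IsTripartition {p} O₃ I₃)
    (hcount : ∀ v, v ≠ p → memCount I₁ I₂ I₃ v = 1)
    (hne : (O₁.Nonempty ∧ I₁.Nonempty) ∨ (O₂.Nonempty ∧ I₂.Nonempty) ∨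
      (O₃.Nonempty ∧ I₃.Nonempty)) :
    IsCommonApexTriple (starFun p O₁ I₁) (starFun p O₂ I₂) (starFun p O₃ I₃) := by
  have hp : p ∉ I₁ ∧ p ∉ I₂ ∧ p ∉ I₃ := ⟨h₁.notMem_right_of_mem_left rfl,
    h₂.notMem_right_of_mem_left rfl, h₃.notMem_right_of_mem_left rfl⟩
  have hcases : ∀ v, v = p ∨ (v ≠ p ∧ v ∈ I₁ ∧ v ∉ I₂ ∧ v ∉ I₃) ∨
      (v ≠ p ∧ v ∉ I₁ ∧ v ∈ I₂ ∧ v ∉ I₃) ∨ (v ≠ p ∧ v ∉ I₁ ∧ v ∉ I₂ ∧ v ∈ I₃) := fun v => by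
    by_cases hv : v = p
    · exact .inl hv
    have := hcount v hv
    simp only [memCount] at this
    by_cases h₁ : v ∈ I₁ <;> by_cases h₂ : v ∈ I₂ <;> by_cases h₃ : v ∈ I₃ <;>
      simp [hv, h₁, h₂, h₃] at this ⊢
  obtain rfl : O₁ = I₂ ∪ I₃ := by
    ext v; rcases hcases v with h | h | h | h <;> simp [h₁.mem_mid_iff, h, hp]
  obtain rfl : O₂ = I₁ ∪ I₃ := by
    ext v; rcases hcases v with h | h | h | h <;> simp [h₂.mem_mid_iff, h, hp]
  obtain rfl : O₃ = I₁ ∪ I₂ := by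
    ext v; rcases hcases v with h | h | h | h <;> simp [h₃.mem_mid_iff, h, hp]
  refine ⟨p, I₁, I₂, I₃, ?_, ?_, ?_, ?_, ?_, ?_, ?_, rfl, rfl, rfl⟩
  iterate 3
    exact Set.disjoint_left.mpr fun v h h' => by rcases hcases v with hv | hv | hv | hv <;> simp_all
  · ext v; rcases hcases v with h | h | h | h <;> simp [h, hp]
  all_goals rintro ⟨rfl, rfl⟩; simp at hne

lemma exists_memCount_ge_one_and_le_two (h₁ : IsTripartition {p} O₁ I₁)
    (h₂ : IsTripartition {p} O₂ I₂) (h₃ : IsTripartition {p} O₃ I₃)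
    (hne : (O₁.Nonempty ∧ I₁.Nonempty) ∨ (O₂.Nonempty ∧ I₂.Nonempty) ∨
      (O₃.Nonempty ∧ I₃.Nonempty)) :
    ∃ i o, i ≠ p ∧ o ≠ p ∧ 1 ≤ memCount I₁ I₂ I₃ i ∧ memCount I₁ I₂ I₃ o ≤ 2 := by
  have hne_p : ∀ {O I : Set V} {v : V}, IsTripartition {p} O I → v ∈ I → v ≠ p :=
    fun h hv hvp => h.notMem_right_of_mem_left hvp hv
  rcases hne with ⟨⟨o, ho⟩, ⟨i, hi⟩⟩ | ⟨⟨o, ho⟩, ⟨i, hi⟩⟩ | ⟨⟨o, ho⟩, ⟨i, hi⟩⟩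
  · refine ⟨i, o, hne_p h₁ hi, (h₁.mem_mid_iff.mp ho).1, ?_, ?_⟩ <;>
      simp only [memCount, hi, (h₁.mem_mid_iff.mp ho).2, if_true, if_false] <;> split_ifs <;> omega
  · refine ⟨i, o, hne_p h₂ hi, (h₂.mem_mid_iff.mp ho).1, ?_, ?_⟩ <;>
      simp only [memCount, hi, (h₂.mem_mid_iff.mp ho).2, if_true, if_false] <;> split_ifs <;> omega
  · refine ⟨i, o, hne_p h₃ hi, (h₃.mem_mid_iff.mp ho).1, ?_, ?_⟩ <;>
      simp only [memCount, hi, (h₃.mem_mid_iff.mp ho).2, if_true, if_false] <;> split_ifs <;> omega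

lemma exists_isCommonApexTriple_of_isTripartition (h₁ : IsTripartition {p} O₁ I₁)
    (h₂ : IsTripartition {p} O₂ I₂) (h₃ : IsTripartition {p} O₃ I₃)
    (hsum : ∀ a b c, starFun p O₁ I₁ a b c + starFun p O₂ I₂ a b c + starFun p O₃ I₃ a b c = 0)
    (hne : (O₁.Nonempty ∧ I₁.Nonempty) ∨ (O₂.Nonempty ∧ I₂.Nonempty) ∨
      (O₃.Nonempty ∧ I₃.Nonempty)) :
    ∃ ε : ℤ, (ε = 1 ∨ ε = -1) ∧ IsCommonApexTriple (fun a b c => ε * starFun p O₁ I₁ a b c)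
      (fun a b c => ε * starFun p O₂ I₂ a b c) (fun a b c => ε * starFun p O₃ I₃ a b c) := by
  -- on the triangles `p u v` the sum reads `memCount v - memCount u = 0`
  have hconst : ∀ u v, u ≠ p → v ≠ p → memCount I₁ I₂ I₃ u = memCount I₁ I₂ I₃ v := by
    intro u v hu hv
    have := hsum p u v
    rw [starFun_apex_eq_sub h₁ hu hv, starFun_apex_eq_sub h₂ hu hv,
      starFun_apex_eq_sub h₃ hu hv] at this
    simp only [memCount]
    omega
  obtain ⟨i, o, hi, ho, hrange⟩ := exists_memCount_ge_one_and_le_two h₁ h₂ h₃ hne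
  have hi_o := hconst i o hi ho
  by_cases hs : memCount I₁ I₂ I₃ i = 1
  · refine ⟨1, .inl rfl, ?_⟩
    simpa only [one_mul] using isCommonApexTriple_of_memCount_eq_one h₁ h₂ h₃
      (fun v hv => (hconst v i hv hi).trans hs) hne
  -- otherwise every vertex other than `p` lies in exactly two of the `Iⱼ`, i.e. in one `Oⱼ`
  have hO : ∀ v, v ≠ p → memCount O₁ O₂ O₃ v = 1 := fun v hv => by
    have hv2 : memCount I₁ I₂ I₃ v = 2 := by have := hconst v i hv hi; omega
    have hmem : ∀ {O I : Set V}, IsTripartition {p} O I →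
        (if v ∈ O then (1 : ℤ) else 0) = 1 - if v ∈ I then 1 else 0 :=
      fun {_ I} h => by by_cases hvI : v ∈ I <;> simp [h.mem_mid_iff, hv, hvI]
    simp only [memCount, hmem h₁, hmem h₂, hmem h₃] at hv2 ⊢
    omega
  refine ⟨-1, .inr rfl, ?_⟩
  simpa only [neg_one_mul_starFun] using
    isCommonApexTriple_of_memCount_eq_one h₁.swap h₂.swap h₃.swap hO
      (hne.imp And.symm (.imp And.symm And.symm))

lemma exists_isCommonApexTriple {f₁ f₂ f₃ : V → V → V → ℤ} {v : V}
    (hlin₁ : IsLinkingFun f₁) (hlin₂ : IsLinkingFun f₂) (hlin₃ : IsLinkingFun f₃)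
    (hweak₁ : IsWeak f₁) (hweak₂ : IsWeak f₂) (hweak₃ : IsWeak f₃)
    (hsum : ∀ a b c, f₁ a b c + f₂ a b c + f₃ a b c = 0)
    (hnt : IsNontrivial f₁ ∨ IsNontrivial f₂ ∨ IsNontrivial f₃)
    (hv₁ : VanishesAwayFrom f₁ {v}) (hv₂ : VanishesAwayFrom f₂ {v})
    (hv₃ : VanishesAwayFrom f₃ {v}) :
    ∃ ε : ℤ, (ε = 1 ∨ ε = -1) ∧ IsCommonApexTriple (fun a b c => ε * f₁ a b c)
      (fun a b c => ε * f₂ a b c) (fun a b c => ε * f₃ a b c) := by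
  obtain ⟨O₁, I₁, h₁, rfl⟩ := hweak₁.exists_starFun_eq_of_vanishesAwayFrom hlin₁ hv₁
  obtain ⟨O₂, I₂, h₂, rfl⟩ := hweak₂.exists_starFun_eq_of_vanishesAwayFrom hlin₂ hv₂
  obtain ⟨O₃, I₃, h₃, rfl⟩ := hweak₃.exists_starFun_eq_of_vanishesAwayFrom hlin₃ hv₃
  exact exists_isCommonApexTriple_of_isTripartition h₁ h₂ h₃ hsum
    (hnt.imp (·.nonempty_of_eq_starFun)
      (.imp (·.nonempty_of_eq_starFun) (·.nonempty_of_eq_starFun)))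

end CommonApex

section DistinctApexes

variable {V : Type*}

/-- Alternative (A2) of the theorem, without the bound `5 ≤ n`. -/
def IsDistinctApexTriple (g₁ g₂ g₃ : V → V → V → ℤ) : Prop :=
  ∃ p₁ p₂ p₃ : V, p₁ ≠ p₂ ∧ p₁ ≠ p₃ ∧ p₂ ≠ p₃ ∧
    g₁ = starFun p₁ {p₂, p₃} ({p₁, p₂, p₃} : Set V)ᶜ ∧
    g₂ = starFun p₂ {p₁, p₃} ({p₁, p₂, p₃} : Set V)ᶜ ∧
    g₃ = starFun p₃ {p₁, p₂} ({p₁, p₂, p₃} : Set V)ᶜ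

lemma IsStarPartition.eq_pair_of_vanishesAwayFrom {q a b : V} {O I : Set V}
    (h : IsStarPartition q O I) (hqa : q ≠ a) (hqb : q ≠ b)
    (hvan : VanishesAwayFrom (starFun q O I) {a, b})
    (ha : ¬VanishesAwayFrom (starFun q O I) {a}) (hb : ¬VanishesAwayFrom (starFun q O I) {b}) :
    (O = {a, b} ∧ I = ({q, a, b} : Set V)ᶜ) ∨ (I = {a, b} ∧ O = ({q, a, b} : Set V)ᶜ) := by
  rw [h.vanishesAwayFrom_iff hqa.symm, not_or] at ha
  rw [h.vanishesAwayFrom_iff hqb.symm, not_or] at hb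
  have hsub : O ⊆ {a, b} ∨ I ⊆ {a, b} := by
    by_contra! hc
    obtain ⟨o, ho, ho'⟩ := Set.not_subset.mp hc.1
    obtain ⟨i, hi, hi'⟩ := Set.not_subset.mp hc.2
    have := hvan q o i (by simp [hqa, hqb]) ho' hi'
    rw [h.starFun_apex_eq_one ho hi] at this
    exact one_ne_zero this
  have hpair : ∀ {S : Set V}, S.Nonempty → S ⊆ {a, b} → S ≠ {a} → S ≠ {b} → S = {a, b} := by
    intro S hS hSab hSa hSb
    rcases Set.subset_pair_iff_eq.mp hSab with rfl | h | h | h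
    exacts [absurd hS Set.not_nonempty_empty, absurd h hSa, absurd h hSb, h]
  rcases hsub with hO | hI
  · have hO := hpair h.1 hO ha.1 hb.1
    exact .inl ⟨hO, by rw [h.isTripartition.right_eq_compl, hO, Set.singleton_union]⟩
  · have hI := hpair h.2.1 hI ha.2 hb.2
    exact .inr ⟨hI, by rw [h.isTripartition.swap.right_eq_compl, hI, Set.singleton_union]⟩

lemma exists_sign_mul_eq_starFun_pair {g h : V → V → V → ℤ} {q₁ q₂ q₃ : V} {O I : Set V}
    (hs : IsStarPartition q₁ O I) (hsum : ∀ a b c, starFun q₁ O I a b c + g a b c + h a b c = 0)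
    (hg : VanishesAwayFrom g {q₂}) (hh : VanishesAwayFrom h {q₃}) (h₁₂ : q₁ ≠ q₂)
    (h₁₃ : q₁ ≠ q₃)
    (hno : ¬∃ v, VanishesAwayFrom (starFun q₁ O I) {v} ∧ VanishesAwayFrom g {v} ∧
      VanishesAwayFrom h {v}) :
    ∃ σ : ℤ, (σ = 1 ∨ σ = -1) ∧
      (fun a b c => σ * starFun q₁ O I a b c) = starFun q₁ {q₂, q₃} ({q₁, q₂, q₃} : Set V)ᶜ := by
  have hvan := VanishesAwayFrom.of_add_add_eq_zero hsum hg hh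
  rw [Set.singleton_union] at hvan
  have hsum' : ∀ a b c, h a b c + starFun q₁ O I a b c + g a b c = 0 := fun a b c => by
    linarith [hsum a b c]
  have h₂ : ¬VanishesAwayFrom (starFun q₁ O I) {q₂} := fun hf =>
    hno ⟨q₂, hf, hg, Set.union_self {q₂} ▸ .of_add_add_eq_zero hsum' hf hg⟩
  have h₃ : ¬VanishesAwayFrom (starFun q₁ O I) {q₃} := fun hf =>
    hno ⟨q₃, hf, Set.union_self {q₃} ▸ .of_add_add_eq_zero (fun a b c => by linarith [hsum a b c])
      hh hf, hh⟩
  rcases hs.eq_pair_of_vanishesAwayFrom h₁₂ h₁₃ hvan h₂ h₃ with ⟨rfl, rfl⟩ | ⟨rfl, rfl⟩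
  · exact ⟨1, .inl rfl, by simp⟩
  · exact ⟨-1, .inr rfl, neg_one_mul_starFun _ _ _⟩

lemma eq_sign_mul_of_sign_mul_eq {f g : V → V → V → ℤ} {σ : ℤ} (hσ : σ = 1 ∨ σ = -1)
    (h : (fun a b c => σ * f a b c) = g) : f = fun a b c => σ * g a b c := by
  subst h
  ext a b c
  rcases hσ with rfl | rfl <;> simp

lemma exists_ne_of_not_exists_vanishesAwayFrom {f₁ f₂ f₃ : V → V → V → ℤ} {q₁ q₂ q₃ : V}
    {σ₁ σ₂ σ₃ : ℤ} {P₁ P₂ P₃ T : Set V} (he₁ : f₁ = fun a b c => σ₁ * starFun q₁ P₁ T a b c)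
    (he₂ : f₂ = fun a b c => σ₂ * starFun q₂ P₂ T a b c)
    (he₃ : f₃ = fun a b c => σ₃ * starFun q₃ P₃ T a b c)
    (hno : ¬∃ v, VanishesAwayFrom f₁ {v} ∧ VanishesAwayFrom f₂ {v} ∧ VanishesAwayFrom f₃ {v}) :
    ∃ x ∈ T, ∃ y ∈ T, x ≠ y := by
  by_contra! hT
  obtain ⟨x, hTx⟩ : ∃ x, T ⊆ {x} := by
    rcases Set.Subsingleton.eq_empty_or_singleton hT with h | ⟨x, h⟩
    exacts [⟨q₁, h ▸ Set.empty_subset _⟩, ⟨x, h.le⟩]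
  have hvan : ∀ {σ : ℤ} {q : V} {P : Set V},
      VanishesAwayFrom (fun a b c => σ * starFun q P T a b c) {x} := fun a b c ha hb hc => by
    simp [starFun_vanishesAwayFrom_of_right_subset hTx a b c ha hb hc]
  exact hno ⟨x, he₁ ▸ hvan, he₂ ▸ hvan, he₃ ▸ hvan⟩

lemma exists_isDistinctApexTriple_of_signs [Fintype V] {f₁ f₂ f₃ : V → V → V → ℤ} {q₁ q₂ q₃ : V}
    {σ₁ σ₂ σ₃ : ℤ} (h₁₂ : q₁ ≠ q₂) (h₁₃ : q₁ ≠ q₃) (h₂₃ : q₂ ≠ q₃)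
    (hsum : ∀ a b c, f₁ a b c + f₂ a b c + f₃ a b c = 0)
    (hno : ¬∃ v, VanishesAwayFrom f₁ {v} ∧ VanishesAwayFrom f₂ {v} ∧ VanishesAwayFrom f₃ {v})
    (hσ₁ : σ₁ = 1 ∨ σ₁ = -1) (hσ₂ : σ₂ = 1 ∨ σ₂ = -1) (hσ₃ : σ₃ = 1 ∨ σ₃ = -1)
    (he₁ : (fun a b c => σ₁ * f₁ a b c) = starFun q₁ {q₂, q₃} ({q₁, q₂, q₃} : Set V)ᶜ)
    (he₂ : (fun a b c => σ₂ * f₂ a b c) = starFun q₂ {q₁, q₃} ({q₁, q₂, q₃} : Set V)ᶜ)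
    (he₃ : (fun a b c => σ₃ * f₃ a b c) = starFun q₃ {q₁, q₂} ({q₁, q₂, q₃} : Set V)ᶜ) :
    ∃ ε : ℤ, (ε = 1 ∨ ε = -1) ∧ 5 ≤ Fintype.card V ∧ IsDistinctApexTriple
      (fun a b c => ε * f₁ a b c) (fun a b c => ε * f₂ a b c) (fun a b c => ε * f₃ a b c) := by
  have he₁' := eq_sign_mul_of_sign_mul_eq hσ₁ he₁
  have he₂' := eq_sign_mul_of_sign_mul_eq hσ₂ he₂
  have he₃' := eq_sign_mul_of_sign_mul_eq hσ₃ he₃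
  obtain ⟨x, hx, y, hy, hxy⟩ := exists_ne_of_not_exists_vanishesAwayFrom he₁' he₂' he₃' hno
  simp only [Set.mem_compl_iff, Set.mem_insert_iff, Set.mem_singleton_iff, not_or] at hx hy
  -- evaluating the sum on the triangles `q₁ q₂ x` and `q₂ q₃ x` forces equal signs
  have e₁₂ := hsum q₁ q₂ x
  have e₂₃ := hsum q₂ q₃ x
  rw [he₁', he₂', he₃'] at e₁₂ e₂₃
  simp [starFun, starEdge, h₁₂, h₁₃, h₂₃, h₁₂.symm, h₁₃.symm, h₂₃.symm, hx] at e₁₂ e₂₃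
  obtain rfl : σ₁ = σ₂ := by linarith
  obtain rfl : σ₁ = σ₃ := by linarith
  refine ⟨σ₁, hσ₁, ?_, q₁, q₂, q₃, h₁₂, h₁₃, h₂₃, he₁, he₂, he₃⟩
  simpa using List.Nodup.length_le_card (l := [q₁, q₂, q₃, x, y]) (by
    simp [h₁₂, h₁₃, h₂₃, hxy, Ne.symm hx.1, Ne.symm hx.2.1, Ne.symm hx.2.2, Ne.symm hy.1,
      Ne.symm hy.2.1, Ne.symm hy.2.2])

lemma exists_isDistinctApexTriple_of_isStarPartition [Fintype V] {q₁ q₂ q₃ : V}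
    {O₁ I₁ O₂ I₂ O₃ I₃ : Set V} (h₁ : IsStarPartition q₁ O₁ I₁) (h₂ : IsStarPartition q₂ O₂ I₂)
    (h₃ : IsStarPartition q₃ O₃ I₃)
    (hsum : ∀ a b c, starFun q₁ O₁ I₁ a b c + starFun q₂ O₂ I₂ a b c + starFun q₃ O₃ I₃ a b c = 0)
    (hno : ¬∃ v, VanishesAwayFrom (starFun q₁ O₁ I₁) {v} ∧
      VanishesAwayFrom (starFun q₂ O₂ I₂) {v} ∧ VanishesAwayFrom (starFun q₃ O₃ I₃) {v}) :
    ∃ ε : ℤ, (ε = 1 ∨ ε = -1) ∧ 5 ≤ Fintype.card V ∧ IsDistinctApexTriple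
      (fun a b c => ε * starFun q₁ O₁ I₁ a b c) (fun a b c => ε * starFun q₂ O₂ I₂ a b c)
      (fun a b c => ε * starFun q₃ O₃ I₃ a b c) := by
  have hsum₂ : ∀ a b c, starFun q₂ O₂ I₂ a b c + starFun q₁ O₁ I₁ a b c +
      starFun q₃ O₃ I₃ a b c = 0 := fun a b c => by linarith [hsum a b c]
  have hsum₃ : ∀ a b c, starFun q₃ O₃ I₃ a b c + starFun q₁ O₁ I₁ a b c +
      starFun q₂ O₂ I₂ a b c = 0 := fun a b c => by linarith [hsum a b c]
  have hv₁ := starFun_vanishesAwayFrom q₁ O₁ I₁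
  have hv₂ := starFun_vanishesAwayFrom q₂ O₂ I₂
  have hv₃ := starFun_vanishesAwayFrom q₃ O₃ I₃
  have h₁₂ : q₁ ≠ q₂ := by
    rintro rfl
    exact hno ⟨q₁, hv₁, hv₂, Set.union_self {q₁} ▸ .of_add_add_eq_zero hsum₃ hv₁ hv₂⟩
  have h₁₃ : q₁ ≠ q₃ := by
    rintro rfl
    exact hno ⟨q₁, hv₁, Set.union_self {q₁} ▸ .of_add_add_eq_zero hsum₂ hv₁ hv₃, hv₃⟩
  have h₂₃ : q₂ ≠ q₃ := by
    rintro rfl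
    exact hno ⟨q₂, Set.union_self {q₂} ▸ .of_add_add_eq_zero hsum hv₂ hv₃, hv₂, hv₃⟩
  obtain ⟨σ₁, hσ₁, he₁⟩ := exists_sign_mul_eq_starFun_pair h₁ hsum hv₂ hv₃ h₁₂ h₁₃ hno
  obtain ⟨σ₂, hσ₂, he₂⟩ := exists_sign_mul_eq_starFun_pair h₂ hsum₂ hv₁ hv₃ h₁₂.symm h₂₃
    fun ⟨v, h₁, h₂, h₃⟩ => hno ⟨v, h₂, h₁, h₃⟩
  obtain ⟨σ₃, hσ₃, he₃⟩ := exists_sign_mul_eq_starFun_pair h₃ hsum₃ hv₁ hv₂ h₁₃.symm h₂₃.symm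
    fun ⟨v, h₁, h₂, h₃⟩ => hno ⟨v, h₂, h₃, h₁⟩
  rw [Set.insert_comm] at he₂
  rw [Set.insert_comm q₃ q₁, Set.pair_comm q₃ q₂] at he₃
  exact exists_isDistinctApexTriple_of_signs h₁₂ h₁₃ h₂₃ hsum hno hσ₁ hσ₂ hσ₃ he₁ he₂ he₃

end DistinctApexes

section ThetaCurve

variable {V : Type*} {f₁ f₂ f₃ : V → V → V → ℤ}

lemma IsWeak.exists_vanishesAwayFrom [Nonempty V] {f : V → V → V → ℤ} (hf : IsLinkingFun f)
    (hw : IsWeak f) : ∃ v, VanishesAwayFrom f {v} := by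
  by_cases hnt : IsNontrivial f
  · obtain ⟨q, O, I, -, rfl⟩ := hw.exists_starFun hf hnt
    exact ⟨q, starFun_vanishesAwayFrom q O I⟩
  · exact ⟨Classical.arbitrary V, fun a b c _ _ _ => eq_zero_of_not_isNontrivial hf.1 hnt a b c⟩

lemma isNontrivial_of_not_exists_vanishesAwayFrom (hf₁ : IsAlt f₁)
    (hsum : ∀ a b c, f₁ a b c + f₂ a b c + f₃ a b c = 0) {v : V}
    (hv₂ : VanishesAwayFrom f₂ {v})
    (hno : ¬∃ v, VanishesAwayFrom f₁ {v} ∧ VanishesAwayFrom f₂ {v} ∧ VanishesAwayFrom f₃ {v}) :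
    IsNontrivial f₁ := by
  by_contra hnt
  have hv₁ : VanishesAwayFrom f₁ {v} := fun a b c _ _ _ => eq_zero_of_not_isNontrivial hf₁ hnt a b c
  exact hno ⟨v, hv₁, hv₂, Set.union_self {v} ▸
    .of_add_add_eq_zero (fun a b c => by linarith [hsum a b c]) hv₁ hv₂⟩

lemma exists_isDistinctApexTriple [Fintype V] [Nonempty V]
    (hlin₁ : IsLinkingFun f₁) (hlin₂ : IsLinkingFun f₂) (hlin₃ : IsLinkingFun f₃)
    (hweak₁ : IsWeak f₁) (hweak₂ : IsWeak f₂) (hweak₃ : IsWeak f₃)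
    (hsum : ∀ a b c, f₁ a b c + f₂ a b c + f₃ a b c = 0)
    (hno : ¬∃ v, VanishesAwayFrom f₁ {v} ∧ VanishesAwayFrom f₂ {v} ∧ VanishesAwayFrom f₃ {v}) :
    ∃ ε : ℤ, (ε = 1 ∨ ε = -1) ∧ 5 ≤ Fintype.card V ∧ IsDistinctApexTriple
      (fun a b c => ε * f₁ a b c) (fun a b c => ε * f₂ a b c) (fun a b c => ε * f₃ a b c) := by
  obtain ⟨v₁, hv₁⟩ := hweak₁.exists_vanishesAwayFrom hlin₁
  obtain ⟨v₂, hv₂⟩ := hweak₂.exists_vanishesAwayFrom hlin₂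
  have hnt₁ := isNontrivial_of_not_exists_vanishesAwayFrom hlin₁.1 hsum hv₂ hno
  have hnt₂ := isNontrivial_of_not_exists_vanishesAwayFrom hlin₂.1
    (fun a b c => by linarith [hsum a b c]) hv₁ fun ⟨v, h₂, h₁, h₃⟩ => hno ⟨v, h₁, h₂, h₃⟩
  have hnt₃ := isNontrivial_of_not_exists_vanishesAwayFrom hlin₃.1
    (fun a b c => by linarith [hsum a b c]) hv₁ fun ⟨v, h₃, h₁, h₂⟩ => hno ⟨v, h₁, h₂, h₃⟩
  obtain ⟨q₁, O₁, I₁, h₁, rfl⟩ := hweak₁.exists_starFun hlin₁ hnt₁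
  obtain ⟨q₂, O₂, I₂, h₂, rfl⟩ := hweak₂.exists_starFun hlin₂ hnt₂
  obtain ⟨q₃, O₃, I₃, h₃, rfl⟩ := hweak₃.exists_starFun hlin₃ hnt₃
  exact exists_isDistinctApexTriple_of_isStarPartition h₁ h₂ h₃ hsum hno

lemma IsDistinctApexTriple.not_vanishesAwayFrom [Fintype V] {g₁ g₂ g₃ : V → V → V → ℤ}
    (h : IsDistinctApexTriple g₁ g₂ g₃) (hcard : 5 ≤ Fintype.card V) (v : V) :
    ¬(VanishesAwayFrom g₁ {v} ∧ VanishesAwayFrom g₂ {v}) := by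
  obtain ⟨p₁, p₂, p₃, h₁₂, h₁₃, h₂₃, rfl, rfl, -⟩ := h
  rintro ⟨hv₁, hv₂⟩
  have h₄ := Finset.card_le_four (a := p₁) (b := p₂) (c := p₃) (d := v)
  obtain ⟨y, -, hy⟩ := Finset.exists_mem_notMem_of_card_lt_card (s := {p₁, p₂, p₃, v})
    (t := Finset.univ) (by rw [Finset.card_univ]; omega)
  simp only [Finset.mem_insert, Finset.mem_singleton, not_or] at hy
  obtain ⟨hy₁, hy₂, hy₃, hyv⟩ := hy
  by_cases hv : v = p₁
  · subst hv
    have := hv₂ p₂ p₃ y (by simpa using h₁₂.symm) (by simpa using h₁₃.symm) (by simpa using hyv)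
    rw [starFun_apex_compl_eq_one (o := p₃) (by simp [h₁₂.symm, h₂₃]) (by simp)
      (Set.insert_subset_insert (Set.subset_insert _ _)) (by simp)
      (by simp [hy₁, hy₂, hy₃])] at this
    exact one_ne_zero this
  · obtain ⟨o, ho, hov⟩ : ∃ o, (o = p₂ ∨ o = p₃) ∧ o ≠ v := by
      by_cases hv₂ : p₂ = v
      · exact ⟨p₃, .inr rfl, fun h => h₂₃ (hv₂.trans h.symm)⟩
      · exact ⟨p₂, .inl rfl, hv₂⟩
    have := hv₁ p₁ o y (by simpa using Ne.symm hv) (by simpa using hov) (by simpa using hyv)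
    rw [starFun_apex_compl_eq_one (by simp [h₁₂, h₁₃]) (by simp) (Set.subset_insert _ _)
      (by simpa using ho) (by simp [hy₁, hy₂, hy₃])] at this
    exact one_ne_zero this

lemma not_isCommonApexTriple_of_isDistinctApexTriple [Fintype V] {g₁ g₂ g₃ : V → V → V → ℤ}
    (h : IsDistinctApexTriple g₁ g₂ g₃) (hcard : 5 ≤ Fintype.card V) :
    ¬IsCommonApexTriple g₁ g₂ g₃ := by
  rintro ⟨p, I₁, I₂, I₃, -, -, -, -, -, -, -, h₁, h₂, -⟩
  exact h.not_vanishesAwayFrom hcard p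
    ⟨h₁ ▸ starFun_vanishesAwayFrom _ _ _, h₂ ▸ starFun_vanishesAwayFrom _ _ _⟩

end ThetaCurve

theorem theta_curve_general {V : Type*} [Fintype V] (n : ℕ)
    (hV : Fintype.card V = n)
    (f₁ f₂ f₃ : V → V → V → ℤ)
    (hlin₁ : IsLinkingFun f₁) (hlin₂ : IsLinkingFun f₂) (hlin₃ : IsLinkingFun f₃)
    (hweak₁ : IsWeak f₁) (hweak₂ : IsWeak f₂) (hweak₃ : IsWeak f₃)
    (hsum : ∀ a b c, f₁ a b c + f₂ a b c + f₃ a b c = 0)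
    (hnt : IsNontrivial f₁ ∨ IsNontrivial f₂ ∨ IsNontrivial f₃) :
    ∃ ε : ℤ, (ε = 1 ∨ ε = -1) ∧
      Xor'
        -- (A1): common apex case
        (∃ (p : V) (I₁ I₂ I₃ : Set V),
          Disjoint I₁ I₂ ∧ Disjoint I₁ I₃ ∧ Disjoint I₂ I₃ ∧
          I₁ ∪ I₂ ∪ I₃ = ({p} : Set V)ᶜ ∧
          ¬(I₁ = ∅ ∧ I₂ = ∅) ∧ ¬(I₁ = ∅ ∧ I₃ = ∅) ∧ ¬(I₂ = ∅ ∧ I₃ = ∅) ∧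
          (fun a b c => ε * f₁ a b c) = starFun p (I₂ ∪ I₃) I₁ ∧
          (fun a b c => ε * f₂ a b c) = starFun p (I₁ ∪ I₃) I₂ ∧
          (fun a b c => ε * f₃ a b c) = starFun p (I₁ ∪ I₂) I₃)
        -- (A2): no common apex case
        (5 ≤ n ∧ ∃ p₁ p₂ p₃ : V, p₁ ≠ p₂ ∧ p₁ ≠ p₃ ∧ p₂ ≠ p₃ ∧
          (fun a b c => ε * f₁ a b c) =
            starFun p₁ ({p₂, p₃} : Set V) (({p₁, p₂, p₃} : Set V)ᶜ) ∧
          (fun a b c => ε * f₂ a b c) =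
            starFun p₂ ({p₁, p₃} : Set V) (({p₁, p₂, p₃} : Set V)ᶜ) ∧
          (fun a b c => ε * f₃ a b c) =
            starFun p₃ ({p₁, p₂} : Set V) (({p₁, p₂, p₃} : Set V)ᶜ)) := by
  subst hV
  by_cases hcommon : ∃ v, VanishesAwayFrom f₁ {v} ∧ VanishesAwayFrom f₂ {v} ∧
      VanishesAwayFrom f₃ {v}
  · obtain ⟨v, hv₁, hv₂, hv₃⟩ := hcommon
    obtain ⟨ε, hε, hA1⟩ := exists_isCommonApexTriple hlin₁ hlin₂ hlin₃ hweak₁ hweak₂ hweak₃ hsum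
      hnt hv₁ hv₂ hv₃
    exact ⟨ε, hε, .inl ⟨hA1, fun hA2 =>
      not_isCommonApexTriple_of_isDistinctApexTriple hA2.2 hA2.1 hA1⟩⟩
  · have : Nonempty V := by
      rcases hnt with h | h | h <;> obtain ⟨a, -⟩ := h.exists_apply_ne_zero <;> exact ⟨a⟩
    obtain ⟨ε, hε, hcard, hA2⟩ := exists_isDistinctApexTriple hlin₁ hlin₂ hlin₃ hweak₁ hweak₂
      hweak₃ hsum hcommon
    exact ⟨ε, hε, .inr ⟨⟨hcard, hA2⟩, not_isCommonApexTriple_of_isDistinctApexTriple hA2 hcard⟩⟩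

/-- the theta-curve theorem (combinatorial form). -/
theorem theta_curve {V : Type*} [Fintype V] (n : ℕ) (hn : 3 ≤ n)
    (hV : Fintype.card V = n)
    (f₁ f₂ f₃ : V → V → V → ℤ)
    (hlin₁ : IsLinkingFun f₁) (hlin₂ : IsLinkingFun f₂) (hlin₃ : IsLinkingFun f₃)
    (hweak₁ : IsWeak f₁) (hweak₂ : IsWeak f₂) (hweak₃ : IsWeak f₃)
    (hsum : ∀ a b c, f₁ a b c + f₂ a b c + f₃ a b c = 0)
    (hnt : IsNontrivial f₁ ∨ IsNontrivial f₂ ∨ IsNontrivial f₃) :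
    ∃ ε : ℤ, (ε = 1 ∨ ε = -1) ∧
      Xor'
        -- (A1): common apex case
        (∃ (p : V) (I₁ I₂ I₃ : Set V),
          Disjoint I₁ I₂ ∧ Disjoint I₁ I₃ ∧ Disjoint I₂ I₃ ∧
          I₁ ∪ I₂ ∪ I₃ = ({p} : Set V)ᶜ ∧
          ¬(I₁ = ∅ ∧ I₂ = ∅) ∧ ¬(I₁ = ∅ ∧ I₃ = ∅) ∧ ¬(I₂ = ∅ ∧ I₃ = ∅) ∧
          (fun a b c => ε * f₁ a b c) = starFun p (I₂ ∪ I₃) I₁ ∧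
          (fun a b c => ε * f₂ a b c) = starFun p (I₁ ∪ I₃) I₂ ∧
          (fun a b c => ε * f₃ a b c) = starFun p (I₁ ∪ I₂) I₃)
        -- (A2): no common apex case
        (5 ≤ n ∧ ∃ p₁ p₂ p₃ : V, p₁ ≠ p₂ ∧ p₁ ≠ p₃ ∧ p₂ ≠ p₃ ∧
          (fun a b c => ε * f₁ a b c) =
            starFun p₁ ({p₂, p₃} : Set V) (({p₁, p₂, p₃} : Set V)ᶜ) ∧
          (fun a b c => ε * f₂ a b c) =
            starFun p₂ ({p₁, p₃} : Set V) (({p₁, p₂, p₃} : Set V)ᶜ) ∧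
          (fun a b c => ε * f₃ a b c) =
            starFun p₃ ({p₁, p₂} : Set V) (({p₁, p₂, p₃} : Set V)ᶜ)) :=
  theta_curve_general n hV f₁ f₂ f₃ hlin₁ hlin₂ hlin₃ hweak₁ hweak₂ hweak₃ hsum hnt
end

section
/- Let λ be a bilinking form between V (|V| = m ≥ 5, with distinguished vertex p common to all triangles of V linking W), and suppose K_V, K_W are weakly linked under λ. Define x ∼ y on V′ = V − {p} by: x ∼ y iff x = y, or x ≠ y and λ((p,x,y), D) = 0 for every cycle D in W. Then ∼ is an equivalence relation on V′. Moreover, if x ∼ y and z ∈ V′ with z ∉ {x,y}, then λ((p,x,z),D) = λ((p,y,z),D) for every cycle D in W. -/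
open scoped Classical

/-- The relation `x ∼ y` on `V − {p}`: `x = y`, or the triangle `(p,x,y)` has
`λ`-value `0` against every cycle of `W`. -/
def simRel {V : Type*} {W : Type*} (lam : V → V → V → W → W → W → ℤ)
    (p x y : V) : Prop :=
  x = y ∨ (x ≠ y ∧ ∀ D : List W, IsCycle D → cycleVal (lam p x y) D = 0)

lemma cycleVal_negF {W : Type*} (f g : W → W → W → ℤ)
    (h : ∀ u v w, g u v w = - f u v w) (D : List W) :
    cycleVal g D = - cycleVal f D := by
  cases D with
  | nil => simp [cycleVal]
  | cons v rest => simp [cycleVal, h]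

lemma cycleVal_four {W : Type*} (f1 f2 f3 f4 : W → W → W → ℤ)
    (h : ∀ u v w, f1 u v w - f2 u v w + f3 u v w - f4 u v w = 0) (D : List W) :
    cycleVal f1 D - cycleVal f2 D + cycleVal f3 D - cycleVal f4 D = 0 := by
  cases D with
  | nil => simp [cycleVal]
  | cons v rest =>
    simp only [cycleVal, ← Finset.sum_sub_distrib, ← Finset.sum_add_distrib]
    exact Finset.sum_eq_zero fun i _ => h _ _ _

/-- `∼` is an equivalence relation on `V − {p}`, and equivalent
vertices have the same linking behaviour. -/
theorem simRel_equivalence {V : Type*} {W : Type*} [Fintype V] [Fintype W]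
    (hV : 5 ≤ Fintype.card V)
    (lam : V → V → V → W → W → W → ℤ)
    (hbl : IsBilinking lam) (hwl : WeaklyLinked lam)
    (p : V)
    (hp : ∀ a b c : V, p ∉ ({a, b, c} : Set V) →
        ∀ D : List W, IsCycle D → cycleVal (lam a b c) D = 0) :
    (∀ x : V, x ≠ p → simRel lam p x x) ∧
    (∀ x y : V, x ≠ p → y ≠ p → simRel lam p x y → simRel lam p y x) ∧
    (∀ x y z : V, x ≠ p → y ≠ p → z ≠ p →
      simRel lam p x y → simRel lam p y z → simRel lam p x z) ∧
    (∀ x y z : V, x ≠ p → y ≠ p → z ≠ p → simRel lam p x y →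
      z ≠ x → z ≠ y →
      ∀ D : List W, IsCycle D →
        cycleVal (lam p x z) D = cycleVal (lam p y z) D) := by
  -- alternation in the second and third `V`-arguments, cycle-valued
  have galt : ∀ a b c : V, ∀ D : List W,
      cycleVal (lam a c b) D = - cycleVal (lam a b c) D := by
    intro a b c D
    exact cycleVal_negF (lam a b c) (lam a c b)
      (fun u v w => (hbl.1 u v w).1.2 a b c) D
  -- the key identity: λ(p,y,z) = λ(p,x,z) − λ(p,x,y) for x,y,z ≠ p
  have key : ∀ x y z : V, x ≠ p → y ≠ p → z ≠ p → ∀ D : List W, IsCycle D →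
      cycleVal (lam p y z) D = cycleVal (lam p x z) D - cycleVal (lam p x y) D := by
    intro x y z hx hy hz D hD
    have h4 := cycleVal_four (lam x y z) (lam p y z) (lam p x z) (lam p x y)
      (fun u v w => (hbl.1 u v w).2 p x y z) D
    have h0 : cycleVal (lam x y z) D = 0 := by
      apply hp x y z _ D hD
      simp only [Set.mem_insert_iff, Set.mem_singleton_iff]
      push_neg
      exact ⟨fun h => hx h.symm, fun h => hy h.symm, fun h => hz h.symm⟩
    rw [h0] at h4
    linarith
  refine ⟨fun x _ => Or.inl rfl, ?_, ?_, ?_⟩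
  · -- symmetry
    intro x y hx hy hxy
    rcases hxy with h | ⟨hne, h0⟩
    · exact Or.inl h.symm
    · refine Or.inr ⟨hne.symm, fun D hD => ?_⟩
      rw [galt p x y D, h0 D hD, neg_zero]
  · -- transitivity
    intro x y z hx hy hz hxy hyz
    rcases hxy with rfl | ⟨hxy, h1⟩
    · exact hyz
    rcases hyz with rfl | ⟨hyz, h2⟩
    · exact Or.inr ⟨hxy, h1⟩
    by_cases hxz : x = z
    · exact Or.inl hxz
    refine Or.inr ⟨hxz, fun D hD => ?_⟩
    have hk := key y x z hy hx hz D hD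
    have hk2 : cycleVal (lam p y x) D = 0 := by
      rw [galt p x y D, h1 D hD, neg_zero]
    rw [hk2, h2 D hD] at hk
    linarith
  · -- equivalent vertices link alike
    intro x y z hx hy hz hxy hzx hzy D hD
    rcases hxy with rfl | ⟨hne, h0⟩
    · rfl
    have hk := key x y z hx hy hz D hD
    rw [h0 D hD] at hk
    linarith
end

section
/- Suppose p ∈ V is common to all triangles of V linking W and q ∈ W is common to all triangles of W linking V, and K_V, K_W are weakly linked under the bilinking form λ. For x ≁ y in V′ = V − {p}, the triangle (p,x,y) links W in a star qO_{xy}I_{xy} with apex q. Then the star depends only on the ∼-equivalence classes: if x ∼ z and y ∼ w (with x ≁ y), then O_{xy} = O_{zw} and I_{xy} = I_{zw}. -/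
open scoped Classical

section Aux

variable {W : Type*}

lemma cycleVal_eq_neg {f g : W → W → W → ℤ}
    (h : ∀ u v w, f u v w = - g u v w) (D : List W) :
    cycleVal f D = - cycleVal g D := by
  cases D with
  | nil => simp [cycleVal]
  | cons v rest =>
    simp only [cycleVal, h, ← Finset.sum_neg_distrib]

lemma cycleVal_comb {f1 f2 f3 f4 : W → W → W → ℤ}
    (h : ∀ u v w, f1 u v w - f2 u v w + f3 u v w - f4 u v w = 0) (D : List W) :
    cycleVal f1 D - cycleVal f2 D + cycleVal f3 D - cycleVal f4 D = 0 := by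
  cases D with
  | nil => simp [cycleVal]
  | cons v rest =>
    simp only [cycleVal, ← Finset.sum_sub_distrib, ← Finset.sum_add_distrib]
    exact Finset.sum_eq_zero fun i _ => h _ _ _

lemma starEdge_eq_one {O I : Set W} (hd : Disjoint O I) {a b : W}
    (ha : a ∈ O) (hb : b ∈ I) : starEdge O I a b = 1 := by
  have : a ∉ I := Set.disjoint_left.mp hd ha
  simp [starEdge, ha, hb, this]

lemma mem_of_starEdge_one {O I : Set W} {a b : W}
    (h : starEdge O I a b = 1) : a ∈ O ∧ b ∈ I := by
  unfold starEdge at h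
  split_ifs at h with h1 h2 <;> first | exact h1 | omega

end Aux


/-- the star `qO_{xy}I_{xy}` linked by the triangle `(p,x,y)` depends
only on the `∼`-equivalence classes of `x` and `y`. -/
theorem star_depends_only_on_classes {V : Type*} {W : Type*} [Fintype V] [Fintype W]
    (lam : V → V → V → W → W → W → ℤ)
    (hbl : IsBilinking lam) (hwl : WeaklyLinked lam)
    (p : V) (q : W)
    (hp : ∀ a b c : V, p ∉ ({a, b, c} : Set V) →
        ∀ D : List W, IsCycle D → cycleVal (lam a b c) D = 0)
    (hq : ∀ u v w : W, q ∉ ({u, v, w} : Set W) →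
        ∀ C : List V, IsCycle C →
          cycleVal (fun a b c => lam a b c u v w) C = 0)
    (x y z w : V) (hx : x ≠ p) (hy : y ≠ p) (hz : z ≠ p) (hw : w ≠ p)
    (hxy : ¬ simRel lam p x y) (hxz : simRel lam p x z) (hyw : simRel lam p y w)
    (O I O' I' : Set W)
    (hOI : IsStarPartition q O I) (hOI' : IsStarPartition q O' I')
    (hxyStar : lam p x y = starFun q O I)
    (hzwStar : lam p z w = starFun q O' I') :
    O = O' ∧ I = I' := by
  obtain ⟨hO1, hI1, hqO, hqI, hdis, huniv⟩ := hOI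
  obtain ⟨hO1', hI1', hqO', hqI', hdis', huniv'⟩ := hOI'
  -- cycle values of the two stars agree on every cycle
  have key : ∀ D : List W, IsCycle D →
      cycleVal (starFun q O I) D = cycleVal (starFun q O' I') D := by
    intro D hD
    have halt2 : ∀ a b c : V, cycleVal (lam a c b) D = - cycleVal (lam a b c) D :=
      fun a b c => cycleVal_eq_neg (fun u v w' => (hbl.1 u v w').1.2 a b c) D
    have hcoc : ∀ a b c d : V, cycleVal (lam b c d) D - cycleVal (lam a c d) D
        + cycleVal (lam a b d) D - cycleVal (lam a b c) D = 0 :=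
      fun a b c d => cycleVal_comb (fun u v w' => (hbl.1 u v w').2 a b c d) D
    have hzero : ∀ a b c : V, a ≠ p → b ≠ p → c ≠ p → cycleVal (lam a b c) D = 0 := by
      intro a b c ha hb hc
      refine hp a b c ?_ D hD
      simp only [Set.mem_insert_iff, Set.mem_singleton_iff]
      push_neg
      exact ⟨Ne.symm ha, Ne.symm hb, Ne.symm hc⟩
    have hsim : ∀ a b : V, simRel lam p a b → a ≠ b → cycleVal (lam p a b) D = 0 := by
      intro a b hab hne
      rcases hab with h | ⟨_, h⟩
      · exact absurd h hne
      · exact h D hD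
    have step1 : cycleVal (lam p x y) D = cycleVal (lam p z y) D := by
      by_cases hxz' : x = z
      · subst hxz'; rfl
      · have h1 := hcoc p x z y
        have h2 := hzero x z y hx hz hy
        have h3 := hsim x z hxz hxz'
        linarith
    have step2 : cycleVal (lam p z y) D = cycleVal (lam p z w) D := by
      by_cases hyw' : y = w
      · subst hyw'; rfl
      · have h1 := hcoc p y w z
        have h2 := hzero y w z hy hw hz
        have h3 := hsim y w hyw hyw'
        have h4 := halt2 p z w
        have h5 := halt2 p z y
        linarith
    rw [← hxyStar, ← hzwStar]
    exact step1.trans step2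
  -- edge values agree away from q
  have hedge : ∀ u v : W, u ≠ q → v ≠ q → starEdge O I u v = starEdge O' I' u v := by
    intro u v hu hv
    by_cases huv : u = v
    · subst huv; simp [starEdge, and_comm]
    · have hD : IsCycle [q, u, v] := by
        refine ⟨?_, by simp⟩
        simp [Ne.symm hu, Ne.symm hv, huv]
      have hk := key [q, u, v] hD
      simpa [cycleVal, starFun, hu, hv] using hk
  have memOI : ∀ u : W, u ≠ q → u ∈ O ∪ I := by
    intro u hu
    have : u ∈ insert q (O ∪ I) := huniv ▸ Set.mem_univ u
    rcases Set.mem_insert_iff.mp this with h | h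
    · exact absurd h hu
    · exact h
  have memOI' : ∀ u : W, u ≠ q → u ∈ O' ∪ I' := by
    intro u hu
    have : u ∈ insert q (O' ∪ I') := huniv' ▸ Set.mem_univ u
    rcases Set.mem_insert_iff.mp this with h | h
    · exact absurd h hu
    · exact h
  have hOeq : O = O' := by
    ext u
    constructor
    · intro huO
      have huq : u ≠ q := fun h => hqO (h ▸ huO)
      rcases memOI' u huq with h | h
      · exact h
      · obtain ⟨v, hv⟩ := hO1'
        have hvq : v ≠ q := fun hh => hqO' (hh ▸ hv)
        have h1 : starEdge O' I' v u = 1 := starEdge_eq_one hdis' hv h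
        have h2 : starEdge O I v u = 1 := (hedge v u hvq huq).trans h1
        exact absurd (mem_of_starEdge_one h2).2 (Set.disjoint_left.mp hdis huO)
    · intro huO
      have huq : u ≠ q := fun h => hqO' (h ▸ huO)
      rcases memOI u huq with h | h
      · exact h
      · obtain ⟨v, hv⟩ := hO1
        have hvq : v ≠ q := fun hh => hqO (hh ▸ hv)
        have h1 : starEdge O I v u = 1 := starEdge_eq_one hdis hv h
        have h2 : starEdge O' I' v u = 1 := (hedge v u hvq huq).symm.trans h1
        exact absurd (mem_of_starEdge_one h2).2 (Set.disjoint_left.mp hdis' huO)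
  refine ⟨hOeq, ?_⟩
  ext u
  constructor
  · intro huI
    have huq : u ≠ q := fun h => hqI (h ▸ huI)
    rcases memOI' u huq with h | h
    · exact absurd huI (Set.disjoint_left.mp hdis (hOeq ▸ h))
    · exact h
  · intro huI
    have huq : u ≠ q := fun h => hqI' (h ▸ huI)
    rcases memOI u huq with h | h
    · exact absurd huI (Set.disjoint_left.mp hdis' (hOeq ▸ h : u ∈ O'))
    · exact h
end
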